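/- arXiv:2405.10275 — 9 statements merged into one kernel-verified Lean document; each statement's English description precedes it below -/
import Mathlib

section
/- For integers n > t ≥ 0 and a set X with |X| ≥ 2, there exist 2^{t+1} Hamming balls of radius t in X^n such that every 2^{t+1} − 1 of them have a common point, but all 2^{t+1} of them have empty intersection. -/
theorem stmt_0 (n t : ℕ) (ht : t < n) (X : Type*) [DecidableEq X]
    (hX : ∃ x y : X, x ≠ y) :
    ∃ c : Fin (2 ^ (t + 1)) → (Fin n → X),
      (∀ S : Finset (Fin (2 ^ (t + 1))), S.card ≤ 2 ^ (t + 1) - 1 →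
        ∃ p : Fin n → X, ∀ i ∈ S, hammingDist p (c i) ≤ t) ∧
      ¬ ∃ p : Fin n → X, ∀ i, hammingDist p (c i) ≤ t := by
  obtain ⟨x, y, hxy⟩ := hX
  have htn : t + 1 ≤ n := ht
  let E : Fin (2 ^ (t + 1)) ≃ (Fin (t + 1) → Bool) :=
    (finFunctionFinEquiv (m := 2) (n := t + 1)).symm.trans
      (Equiv.arrowCongr (Equiv.refl _) finTwoEquiv)
  let emb : Fin (t + 1) ↪ Fin n := Fin.castLEEmb htn
  let c : Fin (2 ^ (t + 1)) → (Fin n → X) := fun i k =>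
    if h : (k : ℕ) < t + 1 then (if E i ⟨k, h⟩ then y else x) else x
  refine ⟨c, ?_, ?_⟩
  · intro S hS
    have hex : ∃ i₀, i₀ ∉ S := by
      by_contra h
      push_neg at h
      have hU : S = Finset.univ := Finset.eq_univ_iff_forall.mpr h
      rw [hU, Finset.card_univ, Fintype.card_fin] at hS
      have : 0 < 2 ^ (t + 1) := by positivity
      omega
    obtain ⟨i₀, hi₀⟩ := hex
    refine ⟨fun k => if h : (k : ℕ) < t + 1 then (if E i₀ ⟨k, h⟩ then x else y) else x, ?_⟩
    intro i hi
    have hne : i ≠ i₀ := fun h => hi₀ (h ▸ hi)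
    have hbne : E i ≠ E i₀ := fun h => hne (E.injective h)
    obtain ⟨j, hj⟩ := Function.ne_iff.mp hbne
    have hsub : (Finset.univ.filter fun k : Fin n =>
        (if h : (k : ℕ) < t + 1 then (if E i₀ ⟨k, h⟩ then x else y) else x) ≠ c i k)
        ⊆ (Finset.univ.erase j).map emb := by
      intro k hk
      simp only [Finset.mem_filter, Finset.mem_univ, true_and] at hk
      by_cases h : (k : ℕ) < t + 1
      · simp only [c, dif_pos h] at hk
        have hbeq : E i ⟨k, h⟩ = E i₀ ⟨k, h⟩ := by
          by_contra hb
          cases h0 : E i₀ ⟨k, h⟩ <;> cases h1 : E i ⟨k, h⟩ <;>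
            simp [h0, h1] at hb hk
        have hjne : (⟨(k : ℕ), h⟩ : Fin (t + 1)) ≠ j := by
          intro he; rw [he] at hbeq; exact hj hbeq
        refine Finset.mem_map.mpr ⟨⟨(k : ℕ), h⟩, Finset.mem_erase.mpr ⟨hjne, Finset.mem_univ _⟩, ?_⟩
        simp [emb, Fin.ext_iff]
      · simp only [c, dif_neg h] at hk
        exact absurd rfl hk
    calc hammingDist _ (c i) ≤ ((Finset.univ.erase j).map emb).card :=
          Finset.card_le_card hsub
      _ = (Finset.univ.erase j).card := Finset.card_map _
      _ = t := by rw [Finset.card_erase_of_mem (Finset.mem_univ _)]; simp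
  · rintro ⟨p, hp⟩
    set i₀ := E.symm (fun j => decide (p (emb j) = x)) with hi₀def
    have hE : E i₀ = fun j => decide (p (emb j) = x) := E.apply_symm_apply _
    have hsub : Finset.univ.map emb ⊆
        Finset.univ.filter fun k : Fin n => p k ≠ c i₀ k := by
      intro k hk
      obtain ⟨j, _, rfl⟩ := Finset.mem_map.mp hk
      simp only [Finset.mem_filter, Finset.mem_univ, true_and]
      have hlt : ((emb j : Fin n) : ℕ) < t + 1 := by
        simpa [emb] using j.isLt
      have hcast : (⟨((emb j : Fin n) : ℕ), hlt⟩ : Fin (t + 1)) = j := by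
        simp [emb, Fin.ext_iff]
      simp only [c, dif_pos hlt, hcast, hE]
      by_cases hpx : p (emb j) = x
      · simp [hpx, hxy]
      · simp [hpx]
    have hcard : t + 1 ≤ hammingDist p (c i₀) := by
      have := Finset.card_le_card hsub
      simp only [hammingDist]; simpa using this
    have := hp i₀
    omega
end

section
/- Define V_{n,d} = sum_{i=0}^{(d-1)/2} C(n,i) if d is odd, and V_{n,d} = sum_{i=0}^{d/2−1} C(n,i) + C(n−1, d/2−1) if d is even. Then for 2 ≤ d ≤ n, V_{n,d} ≥ 2·V_{n−1,d−1}, with equality when d is even. Consequently, V_{n,d} ≥ 2^{d−1} for all 1 ≤ d ≤ n. -/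
/-- `V n d` from the paper: size of a Hamming-ball-like region. -/
def V (n d : ℕ) : ℕ :=
  if d % 2 = 1 then ∑ i ∈ Finset.range ((d - 1) / 2 + 1), n.choose i
  else (∑ i ∈ Finset.range (d / 2), n.choose i) + (n - 1).choose (d / 2 - 1)

lemma lemA (k : ℕ) : ∀ m : ℕ,
    (∑ i ∈ Finset.range (m + 1), (k + 1).choose i) + k.choose m
      = 2 * ∑ i ∈ Finset.range (m + 1), k.choose i := by
  intro m
  induction m with
  | zero => simp
  | succ t ih =>
      rw [Finset.sum_range_succ, Finset.sum_range_succ (f := fun i => k.choose i),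
        Nat.choose_succ_succ]
      simp only [Nat.succ_eq_add_one]
      omega

lemma lemC (t k : ℕ) (h : 2 * t + 2 ≤ k) : 2 * (k - 1).choose t ≤ k.choose (t + 1) := by
  obtain ⟨j, rfl⟩ : ∃ j, k = j + 1 := ⟨k - 1, by omega⟩
  simp only [Nat.add_sub_cancel, Nat.choose_succ_succ]
  have : j.choose t ≤ j.choose (t + 1) := by
    rcases Nat.lt_or_ge (2 * t + 1) j with h' | h'
    · exact Nat.choose_le_succ_of_lt_half_left (by omega)
    · have hj : j = 2 * t + 1 := by omega
      subst hj
      have := Nat.choose_symm (n := 2*t+1) (k := t) (by omega)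
      rw [show 2*t+1 - t = t+1 by omega] at this
      omega
  simp only [Nat.succ_eq_add_one] at *
  omega

lemma Vodd (n t : ℕ) : V n (2 * t + 1) = ∑ i ∈ Finset.range (t + 1), n.choose i := by
  unfold V
  rw [if_pos (by omega), show (2 * t + 1 - 1) / 2 = t from by omega]

lemma Veven (n t : ℕ) :
    V n (2 * t + 2) = (∑ i ∈ Finset.range (t + 1), n.choose i) + (n - 1).choose t := by
  unfold V
  rw [if_neg (by omega), show (2 * t + 2) / 2 = t + 1 from by omega, Nat.add_sub_cancel]

theorem stmt_6 :
    (∀ n d : ℕ, 2 ≤ d → d ≤ n →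
      2 * V (n - 1) (d - 1) ≤ V n d ∧ (Even d → V n d = 2 * V (n - 1) (d - 1))) ∧
    (∀ n d : ℕ, 1 ≤ d → d ≤ n → 2 ^ (d - 1) ≤ V n d) := by
  have part1 : ∀ n d : ℕ, 2 ≤ d → d ≤ n →
      2 * V (n - 1) (d - 1) ≤ V n d ∧ (Even d → V n d = 2 * V (n - 1) (d - 1)) := by
    intro n d h2 hdn
    rcases Nat.even_or_odd d with he | ho
    · -- d even, d = 2*(t+1)
      obtain ⟨r, hr⟩ := he
      obtain ⟨t, rfl⟩ : ∃ t, d = 2 * t + 2 := ⟨r - 1, by omega⟩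
      obtain ⟨j, rfl⟩ : ∃ j, n = j + 1 := ⟨n - 1, by omega⟩
      have heq : V (j + 1) (2 * t + 2) = 2 * V j (2 * t + 1) := by
        rw [show 2 * t + 2 = 2 * t + 1 + 1 from rfl] at *
        rw [show 2 * t + 1 + 1 = 2 * t + 2 from rfl, Veven, Vodd]
        simpa using lemA j t
      rw [show j + 1 - 1 = j from rfl, show 2 * t + 2 - 1 = 2 * t + 1 from rfl]
      exact ⟨le_of_eq heq.symm, fun _ => heq⟩
    · -- d odd, d = 2*t+3
      obtain ⟨r, hr⟩ := ho
      obtain ⟨t, rfl⟩ : ∃ t, d = 2 * t + 3 := ⟨r - 1, by omega⟩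
      obtain ⟨k, rfl⟩ : ∃ k, n = k + 1 := ⟨n - 1, by omega⟩
      constructor
      · rw [show k + 1 - 1 = k from rfl, show 2 * t + 3 - 1 = 2 * t + 2 from rfl,
          Veven, show 2 * t + 3 = 2 * (t + 1) + 1 from by ring, Vodd]
        have hA := lemA k (t + 1)
        have hC := lemC t k (by omega)
        rw [Finset.sum_range_succ (f := fun i => k.choose i) (n := t + 1)] at hA
        omega
      · intro hE
        rw [Nat.even_iff] at hE
        omega
  refine ⟨part1, ?_⟩
  intro n d
  induction d generalizing n with
  | zero => intro h _; omega
  | succ e ih =>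
      intro _ hdn
      rcases Nat.eq_zero_or_pos e with rfl | he
      · rw [show (2 : ℕ) ^ (0 + 1 - 1) = 1 from rfl, show 0 + 1 = 2 * 0 + 1 from rfl, Vodd]
        simp
      · have h1 := (part1 n (e + 1) (by omega) hdn).1
        have h2 := ih (n - 1) (by omega) (by omega)
        calc 2 ^ (e + 1 - 1) = 2 * 2 ^ (e - 1) := by
              rw [show e + 1 - 1 = (e - 1) + 1 from by omega]; ring
          _ ≤ 2 * V (n - 1) e := by omega
          _ ≤ V n (e + 1) := h1
end

section
/- Let n > t ≥ 0 and suppose a_1,…,a_m, b_1,…,b_m ∈ {0,1}^n satisfy dist(a_i,b_i) ≥ t+1 for all i ∈ [m] and dist(a_i,b_j) + dist(a_j,b_i) ≤ 2t for all distinct i,j ∈ [m]. Then m ≤ 2^{t+1}. -/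
set_option maxHeartbeats 1000000

open Finset

private lemma hd_eq_sum {N : ℕ} (x y : Fin N → Bool) :
    hammingDist x y = ∑ i, (if x i = y i then 0 else 1) := by
  classical
  unfold hammingDist
  rw [Finset.card_eq_sum_ones, Finset.sum_filter]
  congr 1
  funext i
  by_cases h : x i = y i <;> simp [h]

private def rest {n : ℕ} (k : Fin (n + 1)) (x : Fin (n + 1) → Bool) : Fin n → Bool :=
  fun t => x (k.succAbove t)

private lemma hd_rest {n : ℕ} (k : Fin (n + 1)) (x y : Fin (n + 1) → Bool) :
    hammingDist x y = (if x k = y k then 0 else 1) +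
      hammingDist (rest k x) (rest k y) := by
  rw [hd_eq_sum, hd_eq_sum, Fin.sum_univ_succAbove _ k]
  rfl

private def cmpl {N : ℕ} (x : Fin N → Bool) : Fin N → Bool := fun i => !(x i)

private lemma hd_cmpl_cmpl {N : ℕ} (x y : Fin N → Bool) :
    hammingDist (cmpl x) (cmpl y) = hammingDist x y := by
  rw [hd_eq_sum, hd_eq_sum]
  congr 1; funext i
  cases h : x i <;> cases h' : y i <;> simp [cmpl, h, h']

private lemma hd_cmpl_left {N : ℕ} (x y : Fin N → Bool) :
    hammingDist (cmpl x) y = hammingDist x (cmpl y) := by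
  rw [hd_eq_sum, hd_eq_sum]
  congr 1; funext i
  cases h : x i <;> cases h' : y i <;> simp [cmpl, h, h']

private lemma bool_csum (x y z : Bool) (h : y ≠ z) :
    ((if x = z then 0 else 1) + (if y = x then 0 else 1) : ℕ) = 1 := by
  revert h; cases x <;> cases y <;> cases z <;> decide

private lemma bool_cone (x y : Bool) (h : y ≠ x) :
    ((if x = y then 0 else 1) : ℕ) = 1 := by
  revert h; cases x <;> cases y <;> decide

private lemma split_step (n : ℕ)
    (IH : ∀ (ι : Type) [Fintype ι] (a b : ι → Fin n → Bool) (ℓ : ι → ℕ),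
      (∀ i, ℓ i + 1 ≤ hammingDist (a i) (b i)) →
      (∀ i j, i ≠ j → hammingDist (a i) (b j) + hammingDist (a j) (b i) ≤ ℓ i + ℓ j) →
      ∑ i, ((2 : ℚ)⁻¹) ^ ℓ i ≤ 2)
    (ι : Type) [Fintype ι] (a b : ι → Fin (n + 1) → Bool) (ℓ : ι → ℕ)
    (h1 : ∀ i, ℓ i + 1 ≤ hammingDist (a i) (b i))
    (h2 : ∀ i j, i ≠ j → hammingDist (a i) (b j) + hammingDist (a j) (b i) ≤ ℓ i + ℓ j)
    (k : Fin (n + 1)) (hk : ∀ i, ℓ i = 0 → a i k = b i k) :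
    ∑ i, ((2 : ℚ)⁻¹) ^ ℓ i ≤ 2 := by
  classical
  have main : ∀ ε : Bool, ∑ i ∈ univ.filter (fun i => a i k = b i k ∨ a i k = ε),
      ((2:ℚ)⁻¹) ^ (if a i k = b i k then ℓ i else ℓ i - 1) ≤ 2 := by
    intro ε
    have step := IH {i : ι // a i k = b i k ∨ a i k = ε}
      (fun i => rest k (a i.1)) (fun i => rest k (b i.1))
      (fun i => if a i.1 k = b i.1 k then ℓ i.1 else ℓ i.1 - 1)
      (by
        rintro ⟨i, hi⟩
        have H := hd_rest k (a i) (b i)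
        have H1 := h1 i
        show (if a i k = b i k then ℓ i else ℓ i - 1) + 1 ≤
          hammingDist (rest k (a i)) (rest k (b i))
        by_cases hc : a i k = b i k
        · rw [if_pos hc] at H ⊢
          omega
        · have hz : ℓ i ≠ 0 := fun h0 => hc (hk i h0)
          rw [if_neg hc] at H ⊢
          omega)
      (by
        rintro ⟨i, hi⟩ ⟨j, hj⟩ hne
        have hij : i ≠ j := fun h => hne (Subtype.ext h)
        have H2 := h2 i j hij
        have Hij := hd_rest k (a i) (b j)
        have Hji := hd_rest k (a j) (b i)
        show hammingDist (rest k (a i)) (rest k (b j)) +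
            hammingDist (rest k (a j)) (rest k (b i)) ≤
            (if a i k = b i k then ℓ i else ℓ i - 1) +
            (if a j k = b j k then ℓ j else ℓ j - 1)
        by_cases hci : a i k = b i k <;> by_cases hcj : a j k = b j k
        · rw [if_pos hci, if_pos hcj]
          omega
        · have hzj : ℓ j ≠ 0 := fun h0 => hcj (hk j h0)
          have hcsum : ((if a i k = b j k then 0 else 1) +
              (if a j k = b i k then 0 else 1) : ℕ) = 1 := by
            rw [show b i k = a i k from hci.symm]
            exact bool_csum _ _ _ hcj
          rw [if_pos hci, if_neg hcj]
          omega
        · have hzi : ℓ i ≠ 0 := fun h0 => hci (hk i h0)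
          have hcsum : ((if a j k = b i k then 0 else 1) +
              (if a i k = b j k then 0 else 1) : ℕ) = 1 := by
            rw [show b j k = a j k from hcj.symm]
            exact bool_csum _ _ _ hci
          rw [if_neg hci, if_pos hcj]
          omega
        · have hzi : ℓ i ≠ 0 := fun h0 => hci (hk i h0)
          have hzj : ℓ j ≠ 0 := fun h0 => hcj (hk j h0)
          have hai : a i k = ε := hi.resolve_left hci
          have haj : a j k = ε := hj.resolve_left hcj
          have hc1 : ((if a i k = b j k then 0 else 1) : ℕ) = 1 := by
            apply bool_cone
            intro h
            exact hcj (by rw [h, hai, haj])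
          have hc2 : ((if a j k = b i k then 0 else 1) : ℕ) = 1 := by
            apply bool_cone
            intro h
            exact hci (by rw [h, hai, haj])
          rw [if_neg hci, if_neg hcj]
          omega)
    rw [Finset.sum_subtype (p := fun i => a i k = b i k ∨ a i k = ε)
      (univ.filter (fun i => a i k = b i k ∨ a i k = ε))
      (by intro x; simp)
      (fun i => ((2:ℚ)⁻¹) ^ (if a i k = b i k then ℓ i else ℓ i - 1))]
    exact step
  have key2 : ∀ i : ι,
      (if a i k = b i k ∨ a i k = false then
        ((2:ℚ)⁻¹) ^ (if a i k = b i k then ℓ i else ℓ i - 1) else 0) +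
      (if a i k = b i k ∨ a i k = true then
        ((2:ℚ)⁻¹) ^ (if a i k = b i k then ℓ i else ℓ i - 1) else 0)
      = 2 * ((2:ℚ)⁻¹) ^ ℓ i := by
    intro i
    by_cases hc : a i k = b i k
    · rw [if_pos (Or.inl hc), if_pos (Or.inl hc), if_pos hc]
      ring
    · have hz : ℓ i ≠ 0 := fun h0 => hc (hk i h0)
      obtain ⟨p, hp⟩ : ∃ p, ℓ i = p + 1 := ⟨ℓ i - 1, by omega⟩
      have e1 : (if a i k = b i k then ℓ i else ℓ i - 1) = p := by
        rw [if_neg hc]; omega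
      have e2 : ((2:ℚ)⁻¹) ^ ℓ i = ((2:ℚ)⁻¹) ^ p * 2⁻¹ := by
        rw [hp, pow_succ]
      rw [e1]
      rcases Bool.dichotomy (a i k) with hv | hv
      · rw [if_pos (Or.inr hv), if_neg (by
          rintro (h | h)
          · exact hc h
          · rw [hv] at h; exact Bool.false_ne_true h), e2]
        ring
      · rw [if_neg (by
          rintro (h | h)
          · exact hc h
          · rw [hv] at h; exact Bool.true_eq_false_eq_False h), if_pos (Or.inr hv), e2]
        ring
  have hsum : 2 * ∑ i, ((2:ℚ)⁻¹) ^ ℓ i ≤ 4 := by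
    have e1 := main false
    have e2 := main true
    rw [Finset.sum_filter] at e1 e2
    calc 2 * ∑ i, ((2:ℚ)⁻¹) ^ ℓ i
        = ∑ i, (2 * ((2:ℚ)⁻¹) ^ ℓ i) := by rw [Finset.mul_sum]
      _ = ∑ i, ((if a i k = b i k ∨ a i k = false then
              ((2:ℚ)⁻¹) ^ (if a i k = b i k then ℓ i else ℓ i - 1) else 0) +
            (if a i k = b i k ∨ a i k = true then
              ((2:ℚ)⁻¹) ^ (if a i k = b i k then ℓ i else ℓ i - 1) else 0)) :=
          Finset.sum_congr rfl (fun i _ => (key2 i).symm)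
      _ = (∑ i, (if a i k = b i k ∨ a i k = false then
              ((2:ℚ)⁻¹) ^ (if a i k = b i k then ℓ i else ℓ i - 1) else 0)) +
            (∑ i, (if a i k = b i k ∨ a i k = true then
              ((2:ℚ)⁻¹) ^ (if a i k = b i k then ℓ i else ℓ i - 1) else 0)) :=
          Finset.sum_add_distrib
      _ ≤ 2 + 2 := add_le_add e1 e2
      _ = 4 := by norm_num
  linarith

private theorem key_theorem (n : ℕ) :
    ∀ (ι : Type) [Fintype ι] (a b : ι → Fin n → Bool) (ℓ : ι → ℕ),
      (∀ i, ℓ i + 1 ≤ hammingDist (a i) (b i)) →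
      (∀ i j, i ≠ j → hammingDist (a i) (b j) + hammingDist (a j) (b i) ≤ ℓ i + ℓ j) →
      ∑ i, ((2 : ℚ)⁻¹) ^ ℓ i ≤ 2 := by
  classical
  induction n with
  | zero =>
    intro ι _ a b ℓ h1 h2
    haveI : IsEmpty ι := by
      constructor
      intro i
      have := h1 i
      have h0 : hammingDist (a i) (b i) ≤ 0 := by
        simpa using (hammingDist_le_card_fintype (x := a i) (y := b i))
      omega
    rw [Finset.univ_eq_empty, Finset.sum_empty]
    norm_num
  | succ n IH =>
    intro ι _ a b ℓ h1 h2
    by_cases hA : ∃ i j : ι, i ≠ j ∧ ℓ i = 0 ∧ ℓ j = 0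
    · obtain ⟨i, j, hij, hi0, hj0⟩ := hA
      have hzz := h2 i j hij
      rw [hi0, hj0] at hzz
      have hz1 : hammingDist (a i) (b j) = 0 := by omega
      have hz2 : hammingDist (a j) (b i) = 0 := by omega
      have eab : a i = b j := hammingDist_eq_zero.mp hz1
      have eba : a j = b i := hammingDist_eq_zero.mp hz2
      have huniv : (univ : Finset ι) = {i, j} := by
        symm
        rw [Finset.eq_univ_iff_forall]
        intro x
        by_contra hx
        simp only [Finset.mem_insert, Finset.mem_singleton] at hx
        push_neg at hx
        obtain ⟨hxi, hxj⟩ := hx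
        have T1 : hammingDist (a x) (b x) ≤
            hammingDist (a x) (a j) + hammingDist (a j) (b x) :=
          hammingDist_triangle _ _ _
        have T2 : hammingDist (a x) (b x) ≤
            hammingDist (a x) (a i) + hammingDist (a i) (b x) :=
          hammingDist_triangle _ _ _
        rw [eba] at T1
        rw [eab] at T2
        have Hxi := h2 x i hxi
        have Hxj := h2 x j hxj
        rw [hi0] at Hxi
        rw [hj0] at Hxj
        rw [eab] at Hxi
        rw [eba] at Hxj
        have H1 := h1 x
        omega
      rw [huniv, Finset.sum_pair hij, hi0, hj0]
      norm_num
    · by_cases hB : ∃ k : Fin (n + 1), ∀ i, ℓ i = 0 → a i k = b i k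
      · obtain ⟨k, hk⟩ := hB
        exact split_step n IH ι a b ℓ h1 h2 k hk
      · push_neg at hB
        obtain ⟨i0, hi00, _⟩ := hB ⟨0, Nat.succ_pos n⟩
        have hzero_unique : ∀ i, ℓ i = 0 → i = i0 := by
          intro i hi
          by_contra hne
          exact hA ⟨i, i0, hne, hi, hi00⟩
        have hfull : ∀ kk, a i0 kk ≠ b i0 kk := by
          intro kk
          obtain ⟨i, hi, hneq⟩ := hB kk
          rwa [hzero_unique i hi] at hneq
        have hbcomp : b i0 = cmpl (a i0) := by
          funext kk
          have := hfull kk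
          cases h : a i0 kk <;> cases h' : b i0 kk <;> simp_all [cmpl]
        have hpos : ∀ j : ι, j ≠ i0 → ℓ j ≠ 0 := by
          intro j hj h0
          exact hj (hzero_unique j h0)
        have dag : ∀ j : ι, j ≠ i0 →
            hammingDist (a i0) (b j) + hammingDist (a j) (b i0) ≤ ℓ j := by
          intro j hj
          have := h2 i0 j (fun h => hj h.symm)
          rw [hi00] at this
          omega
        have cross : ∀ j j' : ι, j ≠ i0 → j' ≠ i0 →
            hammingDist (a j) (cmpl (b j')) + hammingDist (cmpl (a j')) (b j) ≤
              ℓ j + ℓ j' := by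
          intro j j' hj hj'
          have t1 : hammingDist (a j) (cmpl (b j')) ≤
              hammingDist (a j) (b i0) + hammingDist (b i0) (cmpl (b j')) :=
            hammingDist_triangle _ _ _
          have e1 : hammingDist (b i0) (cmpl (b j')) = hammingDist (a i0) (b j') := by
            rw [hbcomp, hd_cmpl_cmpl]
          have t2' : hammingDist (cmpl (a j')) (b j) = hammingDist (a j') (cmpl (b j)) :=
            hd_cmpl_left _ _
          have t2 : hammingDist (a j') (cmpl (b j)) ≤
              hammingDist (a j') (b i0) + hammingDist (b i0) (cmpl (b j)) :=
            hammingDist_triangle _ _ _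
          have e2 : hammingDist (b i0) (cmpl (b j)) = hammingDist (a i0) (b j) := by
            rw [hbcomp, hd_cmpl_cmpl]
          have d1 := dag j hj
          have d2 := dag j' hj'
          omega
        -- the doubled family
        have h1' : ∀ u : ({j : ι // j ≠ i0} × Bool),
            ℓ u.1.1 + 1 ≤ hammingDist
              (cond u.2 (cmpl (a u.1.1)) (a u.1.1))
              (cond u.2 (cmpl (b u.1.1)) (b u.1.1)) := by
          rintro ⟨⟨j, hj⟩, ε⟩
          cases ε
          · exact h1 j
          · show ℓ j + 1 ≤ hammingDist (cmpl (a j)) (cmpl (b j))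
            rw [hd_cmpl_cmpl]
            exact h1 j
        have h2' : ∀ u v : ({j : ι // j ≠ i0} × Bool), u ≠ v →
            hammingDist (cond u.2 (cmpl (a u.1.1)) (a u.1.1))
              (cond v.2 (cmpl (b v.1.1)) (b v.1.1)) +
            hammingDist (cond v.2 (cmpl (a v.1.1)) (a v.1.1))
              (cond u.2 (cmpl (b u.1.1)) (b u.1.1)) ≤ ℓ u.1.1 + ℓ v.1.1 := by
          rintro ⟨⟨j, hj⟩, ε⟩ ⟨⟨j', hj'⟩, ε'⟩ hne
          cases ε <;> cases ε'
          · have hjj : j ≠ j' := by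
              intro h
              apply hne
              simp [Prod.ext_iff, Subtype.ext_iff, h]
            exact h2 j j' hjj
          · exact cross j j' hj hj'
          · show hammingDist (cmpl (a j)) (b j') + hammingDist (a j') (cmpl (b j)) ≤ _
            rw [hd_cmpl_left (a j) (b j'), ← hd_cmpl_left (a j') (b j)]
            exact cross j j' hj hj'
          · show hammingDist (cmpl (a j)) (cmpl (b j')) +
              hammingDist (cmpl (a j')) (cmpl (b j)) ≤ _
            rw [hd_cmpl_cmpl, hd_cmpl_cmpl]
            have hjj : j ≠ j' := by
              intro h
              apply hne
              simp [Prod.ext_iff, Subtype.ext_iff, h]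
            exact h2 j j' hjj
        have hk' : ∀ u : ({j : ι // j ≠ i0} × Bool), ℓ u.1.1 = 0 →
            (cond u.2 (cmpl (a u.1.1)) (a u.1.1)) ⟨0, Nat.succ_pos n⟩ =
            (cond u.2 (cmpl (b u.1.1)) (b u.1.1)) ⟨0, Nat.succ_pos n⟩ := by
          rintro ⟨⟨j, hj⟩, ε⟩ h0
          exact absurd h0 (hpos j hj)
        have SB := split_step n IH ({j : ι // j ≠ i0} × Bool)
          (fun u => cond u.2 (cmpl (a u.1.1)) (a u.1.1))
          (fun u => cond u.2 (cmpl (b u.1.1)) (b u.1.1))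
          (fun u => ℓ u.1.1) h1' h2' ⟨0, Nat.succ_pos n⟩ hk'
        have hdouble : ∑ u : ({j : ι // j ≠ i0} × Bool), ((2:ℚ)⁻¹) ^ ℓ u.1.1
            = ∑ x ∈ univ.erase i0, (((2:ℚ)⁻¹) ^ ℓ x + ((2:ℚ)⁻¹) ^ ℓ x) := by
          rw [Fintype.sum_prod_type]
          rw [Finset.sum_subtype (univ.erase i0)
            (p := fun j => j ≠ i0) (by intro x; simp)
            (fun x => (((2:ℚ)⁻¹) ^ ℓ x + ((2:ℚ)⁻¹) ^ ℓ x))]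
          apply Finset.sum_congr rfl
          intro s _
          rw [Fintype.sum_bool]
        rw [hdouble] at SB
        rw [Finset.sum_add_distrib] at SB
        have herase : ∑ x ∈ univ.erase i0, ((2:ℚ)⁻¹) ^ ℓ x ≤ 1 := by linarith
        have htot : ∑ i, ((2:ℚ)⁻¹) ^ ℓ i =
            ((2:ℚ)⁻¹) ^ ℓ i0 + ∑ x ∈ univ.erase i0, ((2:ℚ)⁻¹) ^ ℓ x :=
          (Finset.add_sum_erase univ _ (Finset.mem_univ i0)).symm
        rw [htot, hi00, pow_zero]
        linarith

theorem stmt_7 (n t : ℕ) (ht : t < n)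
    (m : ℕ) (a b : Fin m → (Fin n → Bool))
    (h1 : ∀ i, t + 1 ≤ hammingDist (a i) (b i))
    (h2 : ∀ i j, i ≠ j →
      hammingDist (a i) (b j) + hammingDist (a j) (b i) ≤ 2 * t) :
    m ≤ 2 ^ (t + 1) := by
  have key := key_theorem n (Fin m) a b (fun _ => t) h1
    (fun i j hij => by
      show hammingDist (a i) (b j) + hammingDist (a j) (b i) ≤ t + t
      have := h2 i j hij
      omega)
  simp only [Finset.sum_const, Finset.card_univ, Fintype.card_fin, nsmul_eq_mul] at key
  have hpow : (0 : ℚ) < 2 ^ t := by positivity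
  have hcast : (m : ℚ) ≤ 2 ^ (t + 1) := by
    rw [inv_pow] at key
    rw [pow_succ]
    calc (m : ℚ) = (m : ℚ) * (2 ^ t)⁻¹ * 2 ^ t := by field_simp
      _ ≤ 2 * 2 ^ t := mul_le_mul_of_nonneg_right key (le_of_lt hpow)
      _ = 2 ^ t * 2 := by ring
  exact_mod_cast hcast
end

section
/- Let n > t ≥ 0, let X be a finite nonempty set, and let a, b ∈ X^n. Let 0 ≤ δ ≤ t. Then there is a set Y of at most C(4t−δ, t−δ)·|X|^{t−δ} points in X^n such that for every p ∈ X^n with dist(a,p) ≤ min(dist(a,b), 2t−δ) and dist(b,p) ≤ 2t, some point of Y is at Hamming distance at most t from p. -/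
open Finset

theorem stmt_12 (n t δ : ℕ) (hδ : δ ≤ t) (ht : t < n)
    (X : Type*) [DecidableEq X] [Fintype X] [Nonempty X]
    (a b : Fin n → X) :
    ∃ Y : Finset (Fin n → X),
      Y.card ≤ (4 * t - δ).choose (t - δ) * Fintype.card X ^ (t - δ) ∧
      ∀ p : Fin n → X,
        hammingDist a p ≤ min (hammingDist a b) (2 * t - δ) →
        hammingDist b p ≤ 2 * t →
        ∃ y ∈ Y, hammingDist y p ≤ t := by
  classical
  set D : Finset (Fin n) := {i | a i ≠ b i} with hDdef
  have hDab : hammingDist a b = D.card := rfl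
  set r : ℕ := t - δ with hr
  -- common facts about any valid p
  have key : ∀ p : Fin n → X,
      hammingDist a p ≤ min (hammingDist a b) (2 * t - δ) →
      hammingDist b p ≤ 2 * t →
      ∃ k l k' : ℕ,
        k = (({i | a i ≠ p i} : Finset (Fin n)) ∩ D).card ∧
        l = (({i | a i ≠ p i} : Finset (Fin n)) \ D).card ∧
        k + l = hammingDist a p ∧ k' + k = D.card ∧ k' + l ≤ 2 * t := by
    intro p hp1 hp2
    set E : Finset (Fin n) := {i | a i ≠ p i} with hEdef
    refine ⟨(E ∩ D).card, (E \ D).card, (D \ E).card, rfl, rfl, ?_, ?_, ?_⟩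
    · rw [card_inter_add_card_sdiff]; rfl
    · rw [inter_comm]; exact card_sdiff_add_card_inter D _
    · calc (D \ E).card + (E \ D).card
          = ((D \ E) ∪ (E \ D)).card := (card_union_of_disjoint (disjoint_sdiff_sdiff)).symm
        _ ≤ (({i | b i ≠ p i} : Finset (Fin n))).card := by
            apply card_le_card
            intro i hi
            simp only [mem_union, mem_sdiff, hDdef, hEdef, mem_filter, mem_univ, true_and,
              not_not] at hi ⊢
            rcases hi with ⟨h1, h2⟩ | ⟨h1, h2⟩
            · rw [← h2]; exact h1.symm
            · rw [← h2]; exact h1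
        _ ≤ 2 * t := hp2
  by_cases hm : D.card ≤ 4 * t - δ
  · -- main case
    obtain ⟨D', hDD', -, hD'card⟩ :=
      exists_subsuperset_card_eq (subset_univ D)
        (le_min hm (by simpa using card_le_card (subset_univ D)))
        (by simp [min_le_right])
    have hrD' : r ≤ D'.card := by rw [hD'card]; exact le_min (by omega) (by omega)
    refine ⟨(D'.powersetCard r).biUnion
      (fun T => Fintype.piFinset fun i => if i ∈ T then (univ : Finset X) else {a i}), ?_, ?_⟩
    · calc _ ≤ ∑ T ∈ D'.powersetCard r,
            (Fintype.piFinset fun i => if i ∈ T then (univ : Finset X) else {a i}).card :=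
          card_biUnion_le
        _ = ∑ T ∈ D'.powersetCard r, Fintype.card X ^ r := by
          apply Finset.sum_congr rfl
          intro T hT
          rw [mem_powersetCard] at hT
          rw [Fintype.card_piFinset]
          calc ∏ i, (if i ∈ T then (univ : Finset X) else {a i}).card
              = ∏ i, (if i ∈ T then Fintype.card X else 1) := by
                apply Finset.prod_congr rfl; intro i _
                split <;> simp
            _ = Fintype.card X ^ r := by
                rw [Finset.prod_ite_mem, univ_inter, prod_const, hT.2]
        _ = (D'.powersetCard r).card * Fintype.card X ^ r := by rw [sum_const, smul_eq_mul]
        _ ≤ (4 * t - δ).choose r * Fintype.card X ^ r := by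
          gcongr
          rw [card_powersetCard, hD'card]
          exact Nat.choose_le_choose r (min_le_left _ _)
    · intro p hp1 hp2
      obtain ⟨k, l, k', hk, hl, hkl, hk'k, hk'l⟩ := key p hp1 hp2
      set E : Finset (Fin n) := {i | a i ≠ p i} with hEdef
      have hkltot : k + l ≤ min (hammingDist a b) (2 * t - δ) := hkl ▸ hp1
      have hklm : k + l ≤ D.card := le_trans hkltot (by rw [hDab] at *; exact min_le_left _ _)
      have hkl2 : k + l ≤ 2 * t - δ := le_trans hkltot (min_le_right _ _)
      have hlt : l ≤ t := by omega
      obtain ⟨T, hTsub, hTcard⟩ := exists_subset_card_eq (s := E ∩ D) (n := min k r)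
        (by rw [← hk]; exact min_le_left _ _)
      set y : Fin n → X := fun i => if i ∈ T then p i else a i with hy
      have hTE : T ⊆ E := hTsub.trans inter_subset_left
      refine ⟨y, ?_, ?_⟩
      · rw [mem_biUnion]
        obtain ⟨T', hTT', hT'sub, hT'card⟩ :=
          exists_subsuperset_card_eq (hTsub.trans ((inter_subset_right).trans hDD'))
            (by rw [hTcard]; exact min_le_right _ _) hrD'
        refine ⟨T', mem_powersetCard.2 ⟨hT'sub, hT'card⟩, ?_⟩
        rw [Fintype.mem_piFinset]
        intro i
        by_cases hi : i ∈ T'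
        · simp [hi]
        · have : i ∉ T := fun h => hi (hTT' h)
          simp [hi, hy, this]
      · have hsub : ({i | y i ≠ p i} : Finset (Fin n)) ⊆ E \ T := by
          intro i hi
          simp only [mem_filter, mem_univ, true_and] at hi
          have hiT : i ∉ T := by
            intro h; apply hi; simp [hy, h]
          rw [mem_sdiff]
          refine ⟨?_, hiT⟩
          simp only [hEdef, mem_filter, mem_univ, true_and]
          intro h; apply hi; simp [hy, hiT, h]
        calc hammingDist y p ≤ (E \ T).card := card_le_card hsub
          _ = #E - min k r := by rw [card_sdiff_of_subset hTE, hTcard]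
          _ ≤ t := by
              have hE : #E = k + l := by rw [hkl]; rfl
              omega
  · -- vacuous case
    refine ⟨∅, by simp, ?_⟩
    intro p hp1 hp2
    exfalso
    obtain ⟨k, l, k', hk, hl, hkl, hk'k, hk'l⟩ := key p hp1 hp2
    have h1 : k + l ≤ 2 * t - δ := le_trans (hkl ▸ hp1) (min_le_right _ _)
    omega
end

section
/- Let m ≥ 1, n > t ≥ 0, let X be a nonempty set, and let a_1,…,a_m ∈ X^n. Let W be the set of points w ∈ X^n such that dist(w, a_i) ≤ t for all i ∈ [m] and, for every coordinate k ∈ [n], w_k ∈ {a_{1,k},…,a_{m,k}}. Then |W| ≤ (e·m)^t. -/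
theorem stmt_13 (n t m : ℕ) (hm : 1 ≤ m) (ht : t < n)
    (X : Type*) [DecidableEq X] [Nonempty X]
    (a : Fin m → (Fin n → X)) (W : Finset (Fin n → X))
    (hW : ∀ w : Fin n → X,
      w ∈ W ↔ ((∀ i, hammingDist w (a i) ≤ t) ∧ ∀ k, ∃ i, w k = a i k)) :
    (W.card : ℝ) ≤ (Real.exp 1 * m) ^ t := by
  rcases W.eq_empty_or_nonempty with hWe | ⟨w0, hw0⟩
  · simp only [hWe, Finset.card_empty, Nat.cast_zero]; positivity
  have hmR : (1:ℝ) ≤ m := by exact_mod_cast hm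
  have hm0 : (0:ℝ) < m := lt_of_lt_of_le zero_lt_one hmR
  set i0 : Fin m := ⟨0, hm⟩ with hi0
  set V : Fin n → Finset X := fun k => Finset.image (fun i => a i k) Finset.univ with hV
  set c : Fin n → ℕ := fun k => ((V k).erase (a i0 k)).card with hc
  set P : Finset (Finset (Fin n)) :=
    Finset.univ.powerset.filter (fun S => S.card ≤ t) with hPd
  set Sf : (Fin n → X) → Finset (Fin n) :=
    fun w => Finset.univ.filter (fun k => w k ≠ a i0 k) with hSfd
  have hSfP : ∀ w ∈ W, Sf w ∈ P := by
    intro w hw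
    have h1 : hammingDist w (a i0) ≤ t := ((hW w).mp hw).1 i0
    simp only [hPd, Finset.mem_filter, Finset.mem_powerset]
    exact ⟨Finset.subset_univ _, h1⟩
  -- combinatorial step
  have key : W.card ≤ ∑ S ∈ P, ∏ k ∈ S, c k := by
    rw [Finset.card_eq_sum_card_fiberwise hSfP]
    refine Finset.sum_le_sum fun S _ => ?_
    have hle : (W.filter (fun w => Sf w = S)).card ≤
        (S.pi (fun k => (V k).erase (a i0 k))).card := Finset.card_le_card_of_injOn
      (fun w => (fun k (_ : k ∈ S) => w k))
      (fun w hw => by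
        rw [Finset.mem_coe, Finset.mem_filter] at hw
        rw [Finset.mem_coe, Finset.mem_pi]
        intro k hk
        rw [← hw.2, hSfd, Finset.mem_filter] at hk
        refine Finset.mem_erase.mpr ⟨hk.2, ?_⟩
        obtain ⟨i, hi⟩ := ((hW w).mp hw.1).2 k
        exact Finset.mem_image.mpr ⟨i, Finset.mem_univ _, hi.symm⟩)
      (fun w hw w' hw' h => by
        rw [Finset.mem_coe, Finset.mem_filter] at hw hw'
        funext k
        by_cases hk : k ∈ S
        · exact congrFun (congrFun h k) hk
        · have h1 : w k = a i0 k := by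
            have := hk; rw [← hw.2, hSfd, Finset.mem_filter] at this
            by_contra hne; exact this ⟨Finset.mem_univ _, hne⟩
          have h2 : w' k = a i0 k := by
            have := hk; rw [← hw'.2, hSfd, Finset.mem_filter] at this
            by_contra hne; exact this ⟨Finset.mem_univ _, hne⟩
          rw [h1, h2])
    rwa [Finset.card_pi] at hle
  -- bound on the total degree sum
  have hD : ∑ k, c k ≤ m * t := by
    have hck : ∀ k, c k ≤ (Finset.univ.filter (fun i => a i k ≠ w0 k)).card := by
      intro k
      have hmem0 : a i0 k ∈ V k := Finset.mem_image.mpr ⟨i0, Finset.mem_univ _, rfl⟩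
      have hmemw : w0 k ∈ V k := by
        obtain ⟨i, hi⟩ := ((hW w0).mp hw0).2 k
        exact Finset.mem_image.mpr ⟨i, Finset.mem_univ _, hi.symm⟩
      have hce : c k = ((V k).erase (w0 k)).card := by
        rw [show c k = ((V k).erase (a i0 k)).card from rfl,
          Finset.card_erase_of_mem hmem0, Finset.card_erase_of_mem hmemw]
      rw [hce]
      have hsub : (V k).erase (w0 k) ⊆
          Finset.image (fun i => a i k) (Finset.univ.filter (fun i => a i k ≠ w0 k)) := by
        intro x hx
        rw [Finset.mem_erase] at hx
        obtain ⟨i, _, hi⟩ := Finset.mem_image.mp hx.2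
        refine Finset.mem_image.mpr ⟨i, ?_, hi⟩
        rw [Finset.mem_filter, hi]
        exact ⟨Finset.mem_univ _, hx.1⟩
      exact le_trans (Finset.card_le_card hsub) (Finset.card_image_le)
    calc ∑ k, c k ≤ ∑ k, (Finset.univ.filter (fun i => a i k ≠ w0 k)).card :=
          Finset.sum_le_sum fun k _ => hck k
      _ = ∑ i, (Finset.univ.filter (fun k => a i k ≠ w0 k)).card := by
          simp only [Finset.card_filter]
          exact Finset.sum_comm
      _ ≤ ∑ _i : Fin m, t := by
          refine Finset.sum_le_sum fun i _ => ?_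
          have : hammingDist w0 (a i) ≤ t := ((hW w0).mp hw0).1 i
          rw [hammingDist_comm] at this
          exact this
      _ = m * t := by simp [mul_comm]
  -- analytic step
  have hprodnn : ∀ S : Finset (Fin n), (0:ℝ) ≤ ∏ k ∈ S, ((c k : ℝ) / m) :=
    fun S => Finset.prod_nonneg fun k _ => div_nonneg (Nat.cast_nonneg _) hm0.le
  calc (W.card : ℝ) ≤ ∑ S ∈ P, ∏ k ∈ S, (c k : ℝ) := by
        exact_mod_cast key
    _ ≤ ∑ S ∈ P, (m:ℝ)^t * ∏ k ∈ S, ((c k : ℝ) / m) := by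
        refine Finset.sum_le_sum fun S hS => ?_
        have hSt : S.card ≤ t := (Finset.mem_filter.mp hS).2
        calc ∏ k ∈ S, (c k:ℝ) = (m:ℝ)^S.card * ∏ k ∈ S, ((c k:ℝ)/m) := by
              rw [← Finset.prod_const, ← Finset.prod_mul_distrib]
              refine Finset.prod_congr rfl fun k _ => ?_
              field_simp
          _ ≤ (m:ℝ)^t * ∏ k ∈ S, ((c k:ℝ)/m) :=
              mul_le_mul_of_nonneg_right (pow_le_pow_right₀ hmR hSt) (hprodnn S)
    _ ≤ ∑ S ∈ Finset.univ.powerset, (m:ℝ)^t * ∏ k ∈ S, ((c k : ℝ) / m) :=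
        Finset.sum_le_sum_of_subset_of_nonneg (Finset.filter_subset _ _)
          (fun S _ _ => mul_nonneg (by positivity) (hprodnn S))
    _ = (m:ℝ)^t * ∏ k, ((c k : ℝ) / m + 1) := by
        rw [Finset.prod_add, ← Finset.mul_sum]
        simp
    _ ≤ (m:ℝ)^t * ∏ k, Real.exp ((c k : ℝ) / m) := by
        refine mul_le_mul_of_nonneg_left
          (Finset.prod_le_prod (fun k _ => by positivity)
            (fun k _ => Real.add_one_le_exp _)) (by positivity)
    _ = (m:ℝ)^t * Real.exp (∑ k, (c k : ℝ) / m) := by rw [Real.exp_sum]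
    _ ≤ (m:ℝ)^t * Real.exp t := by
        refine mul_le_mul_of_nonneg_left (Real.exp_le_exp.mpr ?_) (by positivity)
        rw [← Finset.sum_div, div_le_iff₀ hm0]
        calc (∑ k, (c k:ℝ)) ≤ (m*t : ℕ) := by exact_mod_cast hD
          _ = (t:ℝ) * m := by push_cast; ring
    _ = (Real.exp 1 * m) ^ t := by
        rw [mul_pow, Real.exp_one_pow, mul_comm]
end

section
/- Let m ≥ 12, n > t ≥ 0, let X be a finite nonempty set, and let B_1,…,B_m be Hamming balls of radius t in X^n. If for some α with 12/m < α ≤ 1 at least α·C(m,2) unordered pairs of the balls intersect, then some point of X^n lies in at least α²·m / (24·C(4t,t)·|X|^t) of the balls. -/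
set_option maxHeartbeats 1000000

open Finset

namespace Stmt14Helper

variable {n m : ℕ} {X : Type*} [DecidableEq X] [Fintype X]

/-- coordinates where `y` differs from `x`. -/
def dset (x y : Fin n → X) : Finset (Fin n) := Finset.univ.filter fun i => y i ≠ x i

lemma dset_card (x y : Fin n → X) : (dset x y).card = hammingDist x y := by
  rw [hammingDist_comm, hammingDist]
  rfl

lemma geo_sum_le (q s : ℕ) (hq : 1 ≤ q) :
    ∑ j ∈ Finset.range (s + 1), (q - 1) ^ j ≤ q ^ s := by
  induction s with
  | zero => simp
  | succ s ih =>
    rw [Finset.sum_range_succ]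
    have h1 : (q - 1) ^ (s + 1) ≤ q ^ s * (q - 1) := by
      rw [pow_succ]
      exact Nat.mul_le_mul_right _ (Nat.pow_le_pow_left (by omega) s)
    have h2 : q ^ s + q ^ s * (q - 1) = q ^ (s + 1) := by
      have : 1 + (q - 1) = q := by omega
      calc q ^ s + q ^ s * (q - 1) = q ^ s * (1 + (q - 1)) := by ring
        _ = q ^ s * q := by rw [this]
        _ = q ^ (s + 1) := (pow_succ q s).symm
    omega
  
lemma choose_step (N : ℕ) : ∀ (d j : ℕ), j + d ≤ N / 2 → N.choose j ≤ N.choose (j + d) := by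
  intro d
  induction d with
  | zero => simp
  | succ d ih =>
    intro j hle
    calc N.choose j ≤ N.choose (j + d) := ih j (by omega)
      _ ≤ N.choose (j + d + 1) := Nat.choose_le_succ_of_lt_half_left (by omega)

lemma choose_le_t (t j : ℕ) (hj : j ≤ t) : (4 * t).choose j ≤ (4 * t).choose t := by
  have h := choose_step (4 * t) (t - j) j (by omega)
  rwa [Nat.add_sub_cancel' hj] at h

lemma count_lemma (t : ℕ) (p : Fin n → X) (F : Finset (Fin n)) (hF : F.card ≤ 4 * t)
    (hq : 1 ≤ Fintype.card X) :
    ((Finset.univ : Finset (Fin n → X)).filter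
      (fun z => dset p z ⊆ F ∧ (dset p z).card ≤ t)).card
      ≤ (4 * t).choose t * Fintype.card X ^ t := by
  classical
  set q := Fintype.card X with hqdef
  set S := (Finset.univ : Finset (Fin n → X)).filter
      (fun z => dset p z ⊆ F ∧ (dset p z).card ≤ t) with hS
  set A := F.powerset.filter (fun A => A.card ≤ t) with hA
  have hmap : ∀ z ∈ S, dset p z ∈ A := by
    intro z hz
    simp only [hS, Finset.mem_filter, Finset.mem_univ, true_and] at hz
    simp only [hA, Finset.mem_filter, Finset.mem_powerset]
    exact ⟨hz.1, hz.2⟩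
  rw [Finset.card_eq_sum_card_fiberwise hmap]
  have fib_le : ∀ B ∈ A, (S.filter fun z => dset p z = B).card ≤ (q - 1) ^ B.card := by
    intro B hB
    have : (S.filter fun z => dset p z = B).card ≤ (B.pi (fun i => (Finset.univ : Finset X).erase (p i))).card := by
      apply Finset.card_le_card_of_injOn (fun z => fun i _ => z i)
      · intro z hz
        simp only [Finset.mem_coe, Finset.mem_filter] at hz
        rw [Finset.mem_coe, Finset.mem_pi]
        intro i hi
        rw [← hz.2] at hi
        simp only [dset, Finset.mem_filter, Finset.mem_univ, true_and] at hi
        exact Finset.mem_erase.2 ⟨hi, Finset.mem_univ _⟩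
      · intro z1 hz1 z2 hz2 heq
        simp only [Finset.coe_filter, Set.mem_setOf_eq] at hz1 hz2
        funext i
        by_cases hi : i ∈ B
        · exact congrFun (congrFun heq i) hi
        · have h1 : i ∉ dset p z1 := by rw [hz1.2]; exact hi
          have h2 : i ∉ dset p z2 := by rw [hz2.2]; exact hi
          simp only [dset, Finset.mem_filter, Finset.mem_univ, true_and, not_not] at h1 h2
          rw [h1, h2]
    refine this.trans (le_of_eq ?_)
    rw [Finset.card_pi]
    calc ∏ i ∈ B, ((Finset.univ : Finset X).erase (p i)).card
        = ∏ _i ∈ B, (q - 1) := by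
          apply Finset.prod_congr rfl
          intro i _
          rw [Finset.card_erase_of_mem (Finset.mem_univ _), Finset.card_univ]
      _ = (q - 1) ^ B.card := Finset.prod_const _
  calc ∑ B ∈ A, (S.filter fun z => dset p z = B).card
      ≤ ∑ B ∈ A, (q - 1) ^ B.card := Finset.sum_le_sum fib_le
    _ ≤ (4 * t).choose t * q ^ t := by
        have hA2 : A = (Finset.range (t + 1)).biUnion (fun j => F.powersetCard j) := by
          ext B
          simp only [hA, Finset.mem_filter, Finset.mem_powerset, Finset.mem_biUnion,
            Finset.mem_range, Finset.mem_powersetCard, Nat.lt_succ_iff]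
          constructor
          · rintro ⟨h1, h2⟩; exact ⟨B.card, h2, h1, rfl⟩
          · rintro ⟨j, hj, h1, h2⟩; exact ⟨h1, h2 ▸ hj⟩
        rw [hA2, Finset.sum_biUnion]
        · have inner : ∀ j ∈ Finset.range (t + 1),
              ∑ B ∈ F.powersetCard j, (q - 1) ^ B.card = F.card.choose j * (q - 1) ^ j := by
            intro j _
            rw [Finset.sum_congr rfl (fun B hB => by
              rw [(Finset.mem_powersetCard.1 hB).2])]
            rw [Finset.sum_const, Finset.card_powersetCard, smul_eq_mul]
          rw [Finset.sum_congr rfl inner]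
          calc ∑ j ∈ Finset.range (t + 1), F.card.choose j * (q - 1) ^ j
              ≤ ∑ j ∈ Finset.range (t + 1), (4 * t).choose t * (q - 1) ^ j := by
                apply Finset.sum_le_sum
                intro j hj
                apply Nat.mul_le_mul_right
                calc F.card.choose j ≤ (4 * t).choose j := Nat.choose_le_choose j hF
                  _ ≤ (4 * t).choose t := choose_le_t t j (by
                      simpa [Nat.lt_succ_iff] using hj)
            _ = (4 * t).choose t * ∑ j ∈ Finset.range (t + 1), (q - 1) ^ j := by
                rw [Finset.mul_sum]
            _ ≤ (4 * t).choose t * q ^ t := Nat.mul_le_mul_left _ (geo_sum_le q t hq)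
        · intro i _ j _ hij
          apply Finset.disjoint_left.2
          intro B hBi hBj
          rw [Finset.mem_powersetCard] at hBi hBj
          exact hij (hBi.2 ▸ hBj.2)


def covSet (t : ℕ) (c : Fin m → Fin n → X) (a b : Fin m) : Finset (Fin m) :=
  Finset.univ.filter fun l =>
    hammingDist (c a) (c l) ≤ 2 * t ∧ hammingDist (c b) (c l) ≤ 2 * t ∧
      (2 * t ≤ hammingDist (c a) (c b) + 1 ∨
        hammingDist (c a) (c l) ≤ hammingDist (c a) (c b) + 1)

def uSet (t : ℕ) (c : Fin m → Fin n → X) (a b : Fin m) : Finset (Fin n → X) :=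
  Finset.univ.filter fun z =>
    dset (c a) z ⊆ dset (c a) (c b) ∧ (dset (c a) z).card ≤ t

lemma dset_card' (x y : Fin n → X) : (dset x y).card = hammingDist x y := by
  rw [hammingDist_comm, hammingDist]; rfl

lemma self_mem_uSet (t : ℕ) (c : Fin m → Fin n → X) (a b : Fin m) :
    c a ∈ uSet t c a b := by
  have : dset (c a) (c a) = ∅ := by
    simp [dset]
  simp [uSet, this]

lemma cover_lem (t : ℕ) (c : Fin m → Fin n → X) {a b l : Fin m}
    (hl : l ∈ covSet t c a b) :
    ∃ z ∈ uSet t c a b, hammingDist z (c l) ≤ t := by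
  simp only [covSet, Finset.mem_filter, Finset.mem_univ, true_and] at hl
  obtain ⟨h1, h2, h3⟩ := hl
  set F := dset (c a) (c b) with hFdef
  set D := dset (c a) (c l) with hDdef
  have hFc : F.card = hammingDist (c a) (c b) := dset_card' _ _
  have hDc : D.card = hammingDist (c a) (c l) := dset_card' _ _
  obtain ⟨A, hA1, hA2⟩ := Finset.exists_subset_card_eq
    (min_le_right t (D ∩ F).card)
  set z : Fin n → X := fun i => if i ∈ A then c l i else c a i with hzdef
  have hsubA : dset (c a) z ⊆ A := by
    intro i hi
    simp only [dset, Finset.mem_filter, Finset.mem_univ, true_and, hzdef] at hi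
    by_contra hiA
    rw [if_neg hiA] at hi
    exact hi rfl
  have hAD : A ⊆ D := hA1.trans Finset.inter_subset_left
  have hAF : A ⊆ F := hA1.trans Finset.inter_subset_right
  refine ⟨z, ?_, ?_⟩
  · simp only [uSet, Finset.mem_filter, Finset.mem_univ, true_and]
    refine ⟨hsubA.trans hAF, ?_⟩
    calc (dset (c a) z).card ≤ A.card := Finset.card_le_card hsubA
      _ ≤ t := by rw [hA2]; exact min_le_left _ _
  · -- distance to c l
    have hzl : dset (c l) z ⊆ D \ A := by
      intro i hi
      simp only [dset, Finset.mem_filter, Finset.mem_univ, true_and, hzdef] at hi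
      by_cases hiA : i ∈ A
      · rw [if_pos hiA] at hi; exact absurd rfl hi
      · rw [if_neg hiA] at hi
        refine Finset.mem_sdiff.2 ⟨?_, hiA⟩
        simp only [hDdef, dset, Finset.mem_filter, Finset.mem_univ, true_and]
        exact hi.symm
    have hdistzl : hammingDist z (c l) ≤ D.card - A.card := by
      rw [hammingDist_comm, ← dset_card' (c l) z]
      calc (dset (c l) z).card ≤ (D \ A).card := Finset.card_le_card hzl
        _ = D.card - A.card := Finset.card_sdiff_of_subset hAD
    refine hdistzl.trans ?_
    -- arithmetic
    have e1 : (F \ D).card + (F ∩ D).card = F.card := Finset.card_sdiff_add_card_inter F D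
    have e2 : (D \ F).card + (D ∩ F).card = D.card := Finset.card_sdiff_add_card_inter D F
    have eic : (F ∩ D).card = (D ∩ F).card := by rw [Finset.inter_comm]
    have hbl : (F \ D).card + (D \ F).card ≤ 2 * t := by
      have hsub2 : (F \ D) ∪ (D \ F) ⊆ dset (c l) (c b) := by
        intro i hi
        simp only [dset, Finset.mem_union, Finset.mem_sdiff, Finset.mem_filter,
          Finset.mem_univ, true_and, not_not, hFdef, hDdef] at hi ⊢
        rcases hi with ⟨hb, hleq⟩ | ⟨hlne, hbeq⟩
        · rw [hleq]; exact hb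
        · rw [hbeq]; exact fun he => hlne he.symm
      calc (F \ D).card + (D \ F).card
          = ((F \ D) ∪ (D \ F)).card :=
            (Finset.card_union_of_disjoint (disjoint_sdiff_sdiff)).symm
        _ ≤ (dset (c l) (c b)).card := Finset.card_le_card hsub2
        _ = hammingDist (c l) (c b) := dset_card' _ _
        _ = hammingDist (c b) (c l) := hammingDist_comm _ _
        _ ≤ 2 * t := h2
    have hD2 : D.card ≤ 2 * t := by rw [hDc]; exact h1
    have hdisj : 2 * t ≤ F.card + 1 ∨ D.card ≤ F.card + 1 := by
      rw [hFc, hDc]; exact h3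
    have hAcard : A.card = min t (D ∩ F).card := hA2
    rcases le_total t ((D ∩ F).card) with hmin | hmin
    · rw [hAcard, min_eq_left hmin]; omega
    · rw [hAcard, min_eq_right hmin]; omega


lemma covSet_bound (t : ℕ) (c : Fin m → Fin n → X) (hq : 1 ≤ Fintype.card X)
    (K : ℝ) (hK : 0 < K)
    (hcov : ∀ x : Fin n → X,
      ((Finset.univ.filter fun i : Fin m => hammingDist x (c i) ≤ t).card : ℝ) < K)
    (a b : Fin m) :
    ((covSet t c a b).card : ℝ) < ((4 * t).choose t * Fintype.card X ^ t : ℕ) * K := by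
  classical
  have hCq : (1 : ℕ) ≤ (4 * t).choose t * Fintype.card X ^ t :=
    Nat.one_le_iff_ne_zero.2 (Nat.mul_ne_zero
      (Nat.choose_pos (by omega : t ≤ 4 * t)).ne'
      (pow_ne_zero _ (by omega)))
  by_cases hne : (covSet t c a b).Nonempty
  · obtain ⟨l₀, hl₀⟩ := hne
    have hl₀' := hl₀
    simp only [covSet, Finset.mem_filter, Finset.mem_univ, true_and] at hl₀'
    have hab : hammingDist (c a) (c b) ≤ 4 * t := by
      have := hammingDist_triangle (c a) (c l₀) (c b)
      have h2 : hammingDist (c l₀) (c b) = hammingDist (c b) (c l₀) := hammingDist_comm _ _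
      omega
    have hU : (uSet t c a b).card ≤ (4 * t).choose t * Fintype.card X ^ t := by
      have := count_lemma t (c a) (dset (c a) (c b))
        (by rw [dset_card']; exact hab) hq
      exact this
    set f : Fin m → (Fin n → X) := fun l =>
      if hl : l ∈ covSet t c a b then (cover_lem t c hl).choose else c a with hfdef
    have hmaps : ∀ l ∈ covSet t c a b, f l ∈ uSet t c a b := by
      intro l hl
      rw [hfdef]
      simp only [dif_pos hl]
      exact (cover_lem t c hl).choose_spec.1
    have hcards := Finset.card_eq_sum_card_fiberwise hmaps
    have fib_le : ∀ z ∈ uSet t c a b,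
        (((covSet t c a b).filter fun l => f l = z).card : ℝ)
          ≤ ((Finset.univ.filter fun i : Fin m => hammingDist z (c i) ≤ t).card : ℝ) := by
      intro z hz
      have : ((covSet t c a b).filter fun l => f l = z)
          ⊆ Finset.univ.filter fun i : Fin m => hammingDist z (c i) ≤ t := by
        intro l hl
        simp only [Finset.mem_filter] at hl
        obtain ⟨hl1, hl2⟩ := hl
        simp only [Finset.mem_filter, Finset.mem_univ, true_and]
        have := (cover_lem t c hl1).choose_spec.2
        rw [hfdef] at hl2
        simp only [dif_pos hl1] at hl2
        rwa [hl2] at this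
      exact_mod_cast Nat.cast_le.2 (Finset.card_le_card this)
    have hne' : (uSet t c a b).Nonempty := ⟨c a, self_mem_uSet t c a b⟩
    calc ((covSet t c a b).card : ℝ)
        = ∑ z ∈ uSet t c a b, (((covSet t c a b).filter fun l => f l = z).card : ℝ) := by
          rw [hcards]; push_cast; ring
      _ ≤ ∑ z ∈ uSet t c a b,
            ((Finset.univ.filter fun i : Fin m => hammingDist z (c i) ≤ t).card : ℝ) :=
          Finset.sum_le_sum fib_le
      _ < ∑ _z ∈ uSet t c a b, K := Finset.sum_lt_sum_of_nonempty hne' (fun z _ => hcov z)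
      _ = (uSet t c a b).card * K := by rw [Finset.sum_const, nsmul_eq_mul]
      _ ≤ ((4 * t).choose t * Fintype.card X ^ t : ℕ) * K := by
          apply mul_le_mul_of_nonneg_right _ hK.le
          exact_mod_cast hU
  · rw [Finset.not_nonempty_iff_eq_empty] at hne
    rw [hne]
    simp only [Finset.card_empty, Nat.cast_zero]
    positivity

end Stmt14Helper

open Stmt14Helper Finset

open Classical in
theorem stmt_14 (n t m : ℕ) (hm : 12 ≤ m) (ht : t < n)
    (X : Type*) [DecidableEq X] [Fintype X] [Nonempty X]
    (c : Fin m → (Fin n → X)) (α : ℝ) (hα1 : 12 / m < α) (hα2 : α ≤ 1)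
    (h : α * (m.choose 2) ≤
      ((Finset.univ.filter fun p : Fin m × Fin m => p.1 < p.2 ∧
        ∃ x : Fin n → X, hammingDist x (c p.1) ≤ t ∧ hammingDist x (c p.2) ≤ t).card : ℝ)) :
    ∃ x : Fin n → X,
      α ^ 2 * m / (24 * ((4 * t).choose t) * Fintype.card X ^ t) ≤
        ((Finset.univ.filter fun i : Fin m => hammingDist x (c i) ≤ t).card : ℝ) := by
  by_contra hcon
  push_neg at hcon
  -- basic positivity facts
  have hq1 : 1 ≤ Fintype.card X := Fintype.card_pos
  have hm0 : 0 < m := by omega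
  have hm0R : (0 : ℝ) < m := by exact_mod_cast hm0
  have hm12R : (12 : ℝ) ≤ m := by exact_mod_cast hm
  have hα0 : 0 < α := lt_trans (by positivity) hα1
  have hαm : (12 : ℝ) < α * m := (div_lt_iff₀ hm0R).mp hα1
  have hC0 : (0 : ℝ) < ((4 * t).choose t : ℝ) := by
    exact_mod_cast Nat.choose_pos (by omega : t ≤ 4 * t)
  have hq0R : (0 : ℝ) < (Fintype.card X : ℝ) ^ t := by positivity
  set K : ℝ := α ^ 2 * m / (24 * ((4 * t).choose t) * Fintype.card X ^ t) with hKdef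
  have hK : 0 < K := by
    rw [hKdef]; positivity
  -- all covSets are small
  have hBB : ∀ a b : Fin m, ((covSet t c a b).card : ℝ) < α ^ 2 * m / 24 := by
    intro a b
    have hb := covSet_bound t c hq1 K hK hcon a b
    have heq : (((4 * t).choose t * Fintype.card X ^ t : ℕ) : ℝ) * K = α ^ 2 * m / 24 := by
      rw [hKdef]
      push_cast
      field_simp
    rwa [heq] at hb
  -- the neighborhood sets
  set N : Fin m → Finset (Fin m) := fun i =>
    Finset.univ.filter fun j => j ≠ i ∧ hammingDist (c i) (c j) ≤ 2 * t with hNdef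
  set d : Fin m → ℕ := fun i => (N i).card with hddef
  -- pair sets
  set P : Finset (Fin m × Fin m) := Finset.univ.filter fun p =>
    p.1 < p.2 ∧ hammingDist (c p.1) (c p.2) ≤ 2 * t with hPdef
  set P' : Finset (Fin m × Fin m) := Finset.univ.filter fun p =>
    p.2 < p.1 ∧ hammingDist (c p.1) (c p.2) ≤ 2 * t with hP'def
  set Q : Finset (Fin m × Fin m) := Finset.univ.filter fun p =>
    p.1 ≠ p.2 ∧ hammingDist (c p.1) (c p.2) ≤ 2 * t with hQdef
  have hPcard : α * (m.choose 2 : ℝ) ≤ (P.card : ℝ) := by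
    refine le_trans h ?_
    have hsub : (Finset.univ.filter fun p : Fin m × Fin m => p.1 < p.2 ∧
        ∃ x : Fin n → X, hammingDist x (c p.1) ≤ t ∧ hammingDist x (c p.2) ≤ t) ⊆ P := by
      intro p hp
      simp only [Finset.mem_filter, Finset.mem_univ, true_and] at hp
      obtain ⟨hlt, x, hx1, hx2⟩ := hp
      simp only [hPdef, Finset.mem_filter, Finset.mem_univ, true_and]
      refine ⟨hlt, ?_⟩
      have h1 := hammingDist_triangle (c p.1) x (c p.2)
      have h2 : hammingDist (c p.1) x = hammingDist x (c p.1) := hammingDist_comm _ _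
      omega
    exact_mod_cast Nat.cast_le.2 (Finset.card_le_card hsub)
  have hQsplit : Q = P ∪ P' := by
    ext p
    simp only [hQdef, hPdef, hP'def, Finset.mem_filter, Finset.mem_univ, true_and,
      Finset.mem_union]
    constructor
    · rintro ⟨hne, hd2⟩
      rcases lt_or_gt_of_ne hne with hlt | hgt
      · exact Or.inl ⟨hlt, hd2⟩
      · exact Or.inr ⟨hgt, hd2⟩
    · rintro (⟨hlt, hd2⟩ | ⟨hgt, hd2⟩)
      · exact ⟨ne_of_lt hlt, hd2⟩
      · exact ⟨(ne_of_lt hgt).symm, hd2⟩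
  have hPP' : P'.card = P.card := by
    refine Finset.card_bij' (fun p _ => (p.2, p.1)) (fun p _ => (p.2, p.1)) ?_ ?_ ?_ ?_
    · intro p hp
      simp only [hP'def, Finset.mem_filter, Finset.mem_univ, true_and] at hp
      simp only [hPdef, Finset.mem_filter, Finset.mem_univ, true_and]
      exact ⟨hp.1, by rw [hammingDist_comm]; exact hp.2⟩
    · intro p hp
      simp only [hPdef, Finset.mem_filter, Finset.mem_univ, true_and] at hp
      simp only [hP'def, Finset.mem_filter, Finset.mem_univ, true_and]
      exact ⟨hp.1, by rw [hammingDist_comm]; exact hp.2⟩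
    · intro p _; exact Prod.mk.eta
    · intro p _; exact Prod.mk.eta
  have hdisjPP : Disjoint P P' := by
    rw [Finset.disjoint_left]
    intro p hp hp'
    simp only [hPdef, Finset.mem_filter, Finset.mem_univ, true_and] at hp
    simp only [hP'def, Finset.mem_filter, Finset.mem_univ, true_and] at hp'
    exact absurd hp'.1 (not_lt_of_gt hp.1)
  have hQP : Q.card = 2 * P.card := by
    rw [hQsplit, Finset.card_union_of_disjoint hdisjPP, hPP']
    ring
  have hQd : Q.card = ∑ i, d i := by
    rw [Finset.card_eq_sum_card_fiberwise
      (fun (p : Fin m × Fin m) (_ : p ∈ Q) => Finset.mem_univ p.1)]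
    apply Finset.sum_congr rfl
    intro i _
    refine Finset.card_bij' (fun p _ => p.2) (fun j _ => (i, j)) ?_ ?_ ?_ ?_
    · intro p hp
      simp only [hQdef, Finset.mem_filter, Finset.mem_univ, true_and] at hp
      obtain ⟨⟨hne, hd2⟩, hfst⟩ := hp
      simp only [hNdef, Finset.mem_filter, Finset.mem_univ, true_and]
      subst hfst
      exact ⟨fun hh => hne hh.symm, hd2⟩
    · intro j hj
      simp only [hNdef, Finset.mem_filter, Finset.mem_univ, true_and] at hj
      simp only [hQdef, Finset.mem_filter, Finset.mem_univ, true_and]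
      exact ⟨⟨fun hh => hj.1 hh.symm, hj.2⟩, trivial⟩
    · intro p hp
      simp only [Finset.mem_filter] at hp
      obtain ⟨-, hfst⟩ := hp
      exact Prod.ext hfst.symm rfl
    · intro j _; rfl
  -- triple set
  set T : Finset ((Fin m × Fin m) × Fin m) := Finset.univ.filter fun r =>
    r.1.1 ≠ r.1.2 ∧ r.1.1 ≠ r.2 ∧ r.1.2 ≠ r.2 ∧
      hammingDist (c r.1.1) (c r.2) ≤ 2 * t ∧ hammingDist (c r.1.2) (c r.2) ≤ 2 * t
    with hTdef
  have hTd : T.card = ∑ i, (d i * d i - d i) := by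
    rw [Finset.card_eq_sum_card_fiberwise
      (fun (r : (Fin m × Fin m) × Fin m) (_ : r ∈ T) => Finset.mem_univ r.2)]
    apply Finset.sum_congr rfl
    intro i _
    have hbij : (T.filter fun r => r.2 = i).card = (N i).offDiag.card := by
      refine Finset.card_bij' (fun r _ => r.1) (fun pr _ => (pr, i)) ?_ ?_ ?_ ?_
      · intro r hr
        simp only [hTdef, Finset.mem_filter, Finset.mem_univ, true_and] at hr
        obtain ⟨⟨h12, h1i, h2i, hd1, hd2⟩, hsnd⟩ := hr
        rw [Finset.mem_offDiag]
        refine ⟨?_, ?_, h12⟩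
        · simp only [hNdef, Finset.mem_filter, Finset.mem_univ, true_and]
          subst hsnd
          exact ⟨h1i, by rw [hammingDist_comm]; exact hd1⟩
        · simp only [hNdef, Finset.mem_filter, Finset.mem_univ, true_and]
          subst hsnd
          exact ⟨h2i, by rw [hammingDist_comm]; exact hd2⟩
      · intro pr hpr
        rw [Finset.mem_offDiag] at hpr
        obtain ⟨hu, hw, huw⟩ := hpr
        simp only [hNdef, Finset.mem_filter, Finset.mem_univ, true_and] at hu hw
        simp only [hTdef, Finset.mem_filter, Finset.mem_univ, true_and]
        refine ⟨⟨huw, hu.1, hw.1, ?_, ?_⟩, trivial⟩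
        · rw [hammingDist_comm]; exact hu.2
        · rw [hammingDist_comm]; exact hw.2
      · intro r hr
        simp only [Finset.mem_filter] at hr
        exact Prod.ext rfl hr.2.symm
      · intro pr _; rfl
    rw [hbij, Finset.offDiag_card]
  -- the GOOD set
  set GOOD : Finset ((Fin m × Fin m) × Fin m) := Finset.univ.filter fun r =>
    r.2 ∈ covSet t c r.1.1 r.1.2 with hGdef
  have hGd : GOOD.card = ∑ p ∈ (Finset.univ : Finset (Fin m × Fin m)),
      (covSet t c p.1 p.2).card := by
    rw [Finset.card_eq_sum_card_fiberwise
      (fun (r : (Fin m × Fin m) × Fin m) (_ : r ∈ GOOD) => Finset.mem_univ r.1)]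
    apply Finset.sum_congr rfl
    intro p _
    refine Finset.card_bij' (fun r _ => r.2) (fun l _ => (p, l)) ?_ ?_ ?_ ?_
    · intro r hr
      simp only [hGdef, Finset.mem_filter, Finset.mem_univ, true_and] at hr
      obtain ⟨hmem, hfst⟩ := hr
      rwa [hfst] at hmem
    · intro l hl
      simp only [hGdef, Finset.mem_filter, Finset.mem_univ, true_and]
      exact ⟨hl, trivial⟩
    · intro r hr
      simp only [Finset.mem_filter] at hr
      exact Prod.ext hr.2.symm rfl
    · intro l _; rfl
  -- the folding map
  set ψ : (Fin m × Fin m) × Fin m → (Fin m × Fin m) × Fin m := fun r =>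
    if 2 * t ≤ hammingDist (c r.1.1) (c r.1.2) + 1 then r
    else if hammingDist (c r.1.1) (c r.2) ≤ hammingDist (c r.1.1) (c r.1.2) + 1 then r
    else if hammingDist (c r.1.2) (c r.2) ≤ hammingDist (c r.1.2) (c r.1.1) + 1 then
      ((r.1.2, r.1.1), r.2)
    else ((r.1.1, r.2), r.1.2) with hψdef
  have hmaps : ∀ r ∈ T, ψ r ∈ GOOD := by
    intro r hr
    simp only [hTdef, Finset.mem_filter, Finset.mem_univ, true_and] at hr
    obtain ⟨h12, h1i, h2i, hd1, hd2⟩ := hr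
    rw [hψdef]
    simp only []
    split_ifs with hb1 hb2 hb3
    · simp only [hGdef, covSet, Finset.mem_filter, Finset.mem_univ, true_and]
      exact ⟨hd1, hd2, Or.inl hb1⟩
    · simp only [hGdef, covSet, Finset.mem_filter, Finset.mem_univ, true_and]
      exact ⟨hd1, hd2, Or.inr hb2⟩
    · simp only [hGdef, covSet, Finset.mem_filter, Finset.mem_univ, true_and]
      exact ⟨hd2, hd1, Or.inr hb3⟩
    · simp only [hGdef, covSet, Finset.mem_filter, Finset.mem_univ, true_and]
      refine ⟨by omega, ?_, Or.inr (by omega)⟩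
      rw [hammingDist_comm]; exact hd2
  have fiber3 : ∀ r₀, (T.filter fun r => ψ r = r₀).card ≤ 3 := by
    intro r₀
    have hsub : (T.filter fun r => ψ r = r₀) ⊆
        {r₀, ((r₀.1.2, r₀.1.1), r₀.2), ((r₀.1.1, r₀.2), r₀.1.2)} := by
      rintro ⟨⟨u, w⟩, i⟩ hr
      simp only [Finset.mem_filter] at hr
      obtain ⟨-, hψr⟩ := hr
      rw [hψdef] at hψr
      simp only at hψr
      split_ifs at hψr
      · rw [← hψr]; simp
      · rw [← hψr]; simp
      · rw [← hψr]; simp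
      · rw [← hψr]; simp
    refine (Finset.card_le_card hsub).trans ?_
    apply le_trans (Finset.card_insert_le _ _)
    have h2 := Finset.card_insert_le ((r₀.1.2, r₀.1.1), r₀.2)
      ({((r₀.1.1, r₀.2), r₀.1.2)} : Finset ((Fin m × Fin m) × Fin m))
    simp only [Finset.card_singleton] at h2 ⊢
    omega
  have hTG : T.card ≤ 3 * GOOD.card := by
    rw [Finset.card_eq_sum_card_fiberwise hmaps]
    calc ∑ r₀ ∈ GOOD, (T.filter fun r => ψ r = r₀).card
        ≤ ∑ _r₀ ∈ GOOD, 3 := Finset.sum_le_sum (fun r₀ _ => fiber3 r₀)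
      _ = 3 * GOOD.card := by rw [Finset.sum_const, smul_eq_mul, mul_comm]
  -- real arithmetic
  have hnat : ∀ k : ℕ, ((k * k - k : ℕ) : ℝ) = (k : ℝ) ^ 2 - (k : ℝ) := by
    intro k
    cases k with
    | zero => simp
    | succ k =>
      have hk : k + 1 ≤ (k + 1) * (k + 1) := Nat.le_mul_of_pos_left _ (Nat.succ_pos k)
      rw [Nat.cast_sub hk]
      push_cast
      ring
  set sR : ℝ := ∑ i, (d i : ℝ) with hsRdef
  have hsR0 : 0 ≤ sR := Finset.sum_nonneg (fun i _ => by positivity)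
  have hs1 : α * ((m : ℝ) * ((m : ℝ) - 1)) ≤ sR := by
    have h1 : (Q.card : ℝ) = 2 * (P.card : ℝ) := by exact_mod_cast hQP
    have h2 : (Q.card : ℝ) = sR := by
      rw [hQd, hsRdef]; push_cast; rfl
    have h3 : ((m.choose 2 : ℕ) : ℝ) = m * ((m : ℝ) - 1) / 2 := Nat.cast_choose_two ℝ m
    rw [h3] at hPcard
    nlinarith [hPcard]
  have hTreal : (T.card : ℝ) = (∑ i, (d i : ℝ) ^ 2) - sR := by
    have h1 : (T.card : ℝ) = ∑ i, ((d i * d i - d i : ℕ) : ℝ) := by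
      rw [hTd]; push_cast [Nat.cast_sum]; rfl
    rw [h1, Finset.sum_congr rfl (fun i _ => hnat (d i)), Finset.sum_sub_distrib, hsRdef]
  have hCS : sR ^ 2 ≤ (m : ℝ) * ((T.card : ℝ) + sR) := by
    have h1 : (∑ i, (d i : ℝ)) ^ 2 ≤
        ((Finset.univ : Finset (Fin m)).card : ℝ) * ∑ i, (d i : ℝ) ^ 2 :=
      sq_sum_le_card_mul_sum_sq
    rw [Finset.card_univ, Fintype.card_fin] at h1
    have h2 : (m : ℝ) * ((T.card : ℝ) + sR) = (m : ℝ) * ∑ i, (d i : ℝ) ^ 2 := by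
      rw [hTreal]; ring
    rw [hsRdef, h2]
    exact h1
  have hGlt : (GOOD.card : ℝ) < (m : ℝ) * (m : ℝ) * (α ^ 2 * (m : ℝ) / 24) := by
    have hnem : (Finset.univ : Finset (Fin m × Fin m)).Nonempty := by
      haveI : Nonempty (Fin m) := ⟨⟨0, hm0⟩⟩
      exact Finset.univ_nonempty
    have h1 : (GOOD.card : ℝ) = ∑ p ∈ (Finset.univ : Finset (Fin m × Fin m)),
        ((covSet t c p.1 p.2).card : ℝ) := by
      rw [hGd]; push_cast [Nat.cast_sum]; rfl
    rw [h1]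
    calc ∑ p ∈ (Finset.univ : Finset (Fin m × Fin m)), ((covSet t c p.1 p.2).card : ℝ)
        < ∑ _p ∈ (Finset.univ : Finset (Fin m × Fin m)), (α ^ 2 * (m : ℝ) / 24) :=
          Finset.sum_lt_sum_of_nonempty hnem (fun p _ => hBB p.1 p.2)
      _ = (m : ℝ) * (m : ℝ) * (α ^ 2 * (m : ℝ) / 24) := by
          rw [Finset.sum_const, Finset.card_univ, Fintype.card_prod, Fintype.card_fin,
            nsmul_eq_mul]
          push_cast
          ring
  have hTrealG : (T.card : ℝ) ≤ 3 * (GOOD.card : ℝ) := by exact_mod_cast hTG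
  -- final contradiction
  have hG1 : sR * sR < α ^ 2 * (m : ℝ) ^ 4 / 8 + (m : ℝ) * sR := by
    have h1 : (T.card : ℝ) < 3 * ((m : ℝ) * (m : ℝ) * (α ^ 2 * (m : ℝ) / 24)) := by
      nlinarith [hTrealG, hGlt]
    nlinarith [hCS, h1, hm0R]
  have hG2 : 11 * (m : ℝ) ≤ sR := by
    have h1 : (0 : ℝ) < α * m - α - 11 := by nlinarith [hαm, hα2, hm12R]
    nlinarith [hs1, mul_pos hm0R h1]
  have hG3 : 11 * ((m : ℝ) * sR) ≤ sR * sR := by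
    have h1 := mul_le_mul_of_nonneg_right hG2 hsR0
    calc 11 * ((m : ℝ) * sR) = 11 * (m : ℝ) * sR := by ring
      _ ≤ sR * sR := h1
  have hG4 : (α * ((m : ℝ) * ((m : ℝ) - 1))) ^ 2 ≤ sR * sR := by
    have h0 : 0 ≤ α * ((m : ℝ) * ((m : ℝ) - 1)) := by
      apply mul_nonneg hα0.le
      apply mul_nonneg hm0R.le
      linarith
    rw [sq]
    exact mul_self_le_mul_self h0 hs1
  have hG5 : ((11 / 12 : ℝ) * m) ^ 2 ≤ ((m : ℝ) - 1) ^ 2 := by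
    have h1 : (0 : ℝ) ≤ (11 / 12 : ℝ) * m := by positivity
    have h2 : (11 / 12 : ℝ) * m ≤ (m : ℝ) - 1 := by linarith
    exact pow_le_pow_left₀ h1 h2 2
  have hpos : (0 : ℝ) < α ^ 2 * (m : ℝ) ^ 4 := by positivity
  have e1 : (α * ((m : ℝ) * ((m : ℝ) - 1))) ^ 2 = α ^ 2 * (m : ℝ) ^ 2 * ((m : ℝ) - 1) ^ 2 := by
    ring
  have hα2m2 : (0 : ℝ) ≤ α ^ 2 * (m : ℝ) ^ 2 := by positivity
  have e2 := mul_le_mul_of_nonneg_left hG5 hα2m2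
  have e3 : α ^ 2 * (m : ℝ) ^ 2 * (((11 / 12 : ℝ) * m) ^ 2) =
      (121 / 144) * (α ^ 2 * (m : ℝ) ^ 4) := by ring
  rw [e1] at hG4
  rw [e3] at e2
  linarith [hG1, hG3, hG4, e2, hpos]
end

section
/- Let n > t ≥ 0 and a, b, m ≥ 1. Define an (n,t,a,b,X)-system to be a collection of pairs (A_i, B_i), i ∈ [m], where each A_i = (A_{i,1},…,A_{i,n}) with A_{i,k} ⊆ X, |A_{i,k}| ≤ a, and each B_i = (B_{i,1},…,B_{i,n}) with B_{i,k} ⊆ X, |B_{i,k}| ≤ b, and dist(A_i, B_j) is the number of k with A_{i,k} ∩ B_{j,k} = ∅. If |X| ≥ a+b and dist(A_i, B_j) ≥ t+1 if and only if i = j, then m ≤ C(n, t+1)·C(a+b, b)^{t+1}. -/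
open Finset

namespace Stmt15Aux

variable {α : Type*} [DecidableEq α] {ι κ : Type*}

noncomputable def Pp (A : ι → κ → Finset α) (γ : α → ℝ) (i : ι) (k : κ) : Polynomial ℝ :=
  ∏ y ∈ A i k, (Polynomial.X - Polynomial.C (γ y))

noncomputable def pv (a : ℕ) (A : ι → κ → Finset α) (γ : α → ℝ) (i : ι) (k : κ)
    (s : Fin (a + 1)) : ℝ :=
  (Pp A γ i k).coeff s

noncomputable def vc (a b : ℕ) (B : ι → κ → Finset α) (γ : α → ℝ) (j : ι) (k : κ)
    (r : Fin b) (s : Fin (a + 1)) : ℝ :=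
  if h : (r : ℕ) < (B j k).card then γ ((B j k).equivFin.symm ⟨r, h⟩ : α) ^ (s : ℕ)
  else if (s : ℕ) = 0 then 1 else 0

noncomputable def entry [Fintype κ] (a b : ℕ) (A B : ι → κ → Finset α) (γ : α → ℝ)
    (i j : ι) : ℝ :=
  ∏ k : κ, ∏ r : Fin b, ∑ s : Fin (a + 1), pv a A γ i k s * vc a b B γ j k r s

def symOf {b : ℕ} {β : Type*} (g : Fin b → β) : Sym β b :=
  ⟨(univ : Finset (Fin b)).val.map g, by simp⟩

noncomputable def cf [Fintype κ] (a b : ℕ) (B : ι → κ → Finset α) (γ : α → ℝ) (j : ι)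
    (κf : κ → Sym (Fin (a + 1)) b) : ℝ :=
  ∏ k : κ, ∑ g ∈ univ.filter (fun g : Fin b → Fin (a + 1) => symOf g = κf k),
    ∏ r : Fin b, vc a b B γ j k r (g r)

noncomputable def mval [Fintype κ] (a b : ℕ) (A : ι → κ → Finset α) (γ : α → ℝ) (i : ι)
    (κf : κ → Sym (Fin (a + 1)) b) : ℝ :=
  ∏ k : κ, ((κf k : Multiset (Fin (a + 1))).map (pv a A γ i k)).prod

lemma eval_sum {a : ℕ} {A : ι → κ → Finset α} {γ : α → ℝ} {i : ι} {k : κ}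
    (hA : (A i k).card ≤ a) (z : ℝ) :
    ∑ s : Fin (a + 1), pv a A γ i k s * z ^ (s : ℕ) = ∏ y ∈ A i k, (z - γ y) := by
  have hd : (Pp A γ i k).natDegree < a + 1 := by
    apply Nat.lt_succ_of_le
    refine le_trans (Polynomial.natDegree_prod_le _ _) (le_trans ?_ hA)
    have : ∀ y ∈ A i k, (Polynomial.X - Polynomial.C (γ y)).natDegree ≤ 1 := by
      intro y _; simp [Polynomial.natDegree_X_sub_C]
    calc ∑ y ∈ A i k, (Polynomial.X - Polynomial.C (γ y)).natDegree
        ≤ (A i k).card • 1 := Finset.sum_le_card_nsmul _ _ 1 this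
      _ = (A i k).card := by simp
  calc ∑ s : Fin (a + 1), pv a A γ i k s * z ^ (s : ℕ)
      = ∑ s ∈ Finset.range (a + 1), (Pp A γ i k).coeff s * z ^ s :=
        Fin.sum_univ_eq_sum_range (fun s => (Pp A γ i k).coeff s * z ^ s) (a + 1)
    _ = (Pp A γ i k).eval z := (Polynomial.eval_eq_sum_range' hd z).symm
    _ = ∏ y ∈ A i k, (z - γ y) := by simp [Pp, Polynomial.eval_prod]

lemma sum_pv_pad {a : ℕ} {A : ι → κ → Finset α} {γ : α → ℝ} {i : ι} {k : κ} :
    ∑ s : Fin (a + 1), pv a A γ i k s * (if (s : ℕ) = 0 then 1 else 0)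
      = ∏ y ∈ A i k, (0 - γ y) := by
  have h1 : ∑ s : Fin (a + 1), pv a A γ i k s * (if (s : ℕ) = 0 then 1 else 0)
      = pv a A γ i k 0 := by
    rw [Finset.sum_eq_single (0 : Fin (a + 1))]
    · simp
    · intro s _ hs
      have : ¬ ((s : ℕ) = 0) := by
        exact fun h0 => hs (Fin.ext (by rw [h0]; simp))
      simp [this]
    · simp
  rw [h1]
  have : (Pp A γ i k).coeff 0 = (Pp A γ i k).eval 0 := Polynomial.coeff_zero_eq_eval_zero _
  simp only [pv, Fin.val_zero, this]
  simp [Pp, Polynomial.eval_prod]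

lemma sum_factor_lt {a b : ℕ} {A B : ι → κ → Finset α} {γ : α → ℝ} {i j : ι} {k : κ}
    (hA : (A i k).card ≤ a) {r : Fin b} (h : (r : ℕ) < (B j k).card) :
    ∑ s : Fin (a + 1), pv a A γ i k s * vc a b B γ j k r s
      = ∏ y ∈ A i k, (γ ((B j k).equivFin.symm ⟨r, h⟩ : α) - γ y) := by
  simp only [vc, dif_pos h]
  exact eval_sum hA _

lemma sum_factor_ge {a b : ℕ} {A B : ι → κ → Finset α} {γ : α → ℝ} {i j : ι} {k : κ}
    {r : Fin b} (h : ¬ ((r : ℕ) < (B j k).card)) :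
    ∑ s : Fin (a + 1), pv a A γ i k s * vc a b B γ j k r s
      = ∏ y ∈ A i k, (0 - γ y) := by
  simp only [vc, dif_neg h]
  exact sum_pv_pad

lemma entry_eq_zero [Fintype κ] {a b : ℕ} {A B : ι → κ → Finset α} {γ : α → ℝ} {i j : ι}
    (hA : ∀ k, (A i k).card ≤ a) (hB : ∀ k, (B j k).card ≤ b)
    {k₀ : κ} {x : α} (hxA : x ∈ A i k₀) (hxB : x ∈ B j k₀) :
    entry a b A B γ i j = 0 := by
  apply Finset.prod_eq_zero (Finset.mem_univ k₀)
  set r₀ : Fin (B j k₀).card := (B j k₀).equivFin ⟨x, hxB⟩ with hr₀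
  have hlt : (r₀ : ℕ) < b := lt_of_lt_of_le r₀.isLt (hB k₀)
  apply Finset.prod_eq_zero (Finset.mem_univ (⟨(r₀ : ℕ), hlt⟩ : Fin b))
  have h : ((⟨(r₀ : ℕ), hlt⟩ : Fin b) : ℕ) < (B j k₀).card := r₀.isLt
  rw [sum_factor_lt (hA k₀) h]
  have hx : ((B j k₀).equivFin.symm ⟨(⟨(r₀ : ℕ), hlt⟩ : Fin b), h⟩ : α) = x := by
    have : (⟨((⟨(r₀ : ℕ), hlt⟩ : Fin b) : ℕ), h⟩ : Fin (B j k₀).card) = r₀ := by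
      apply Fin.ext; rfl
    rw [this, hr₀, Equiv.symm_apply_apply]
  rw [hx]
  exact Finset.prod_eq_zero hxA (by simp)

lemma entry_ne_zero [Fintype κ] {a b : ℕ} {A B : ι → κ → Finset α} {γ : α → ℝ} {i : ι}
    (hA : ∀ k, (A i k).card ≤ a)
    (hγ : ∀ k, ∀ x ∈ B i k, ∀ y ∈ A i k, γ x ≠ γ y)
    (hγ0 : ∀ k, ∀ y ∈ A i k, γ y ≠ 0) :
    entry a b A B γ i i ≠ 0 := by
  unfold entry
  rw [Finset.prod_ne_zero_iff]
  intro k _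
  rw [Finset.prod_ne_zero_iff]
  intro r _
  by_cases h : (r : ℕ) < (B i k).card
  · rw [sum_factor_lt (hA k) h]
    rw [Finset.prod_ne_zero_iff]
    intro y hy
    refine sub_ne_zero.mpr (hγ k _ ?_ y hy)
    exact ((B i k).equivFin.symm ⟨r, h⟩).2
  · rw [sum_factor_ge h]
    rw [Finset.prod_ne_zero_iff]
    intro y hy
    simpa using hγ0 k y hy

lemma mval_symOf [Fintype κ] {a b : ℕ} {A : ι → κ → Finset α} {γ : α → ℝ} {i : ι} {k : κ}
    (g : Fin b → Fin (a + 1)) :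
    ((symOf g : Multiset (Fin (a + 1))).map (pv a A γ i k)).prod
      = ∏ r : Fin b, pv a A γ i k (g r) := by
  have hcoe : (symOf g : Multiset (Fin (a + 1))) = (univ : Finset (Fin b)).val.map g := rfl
  rw [hcoe, Multiset.map_map]
  rfl

lemma pairing [Fintype κ] [DecidableEq κ] {a b : ℕ} (A B : ι → κ → Finset α) (γ : α → ℝ) (i j : ι) :
    ∑ κf : κ → Sym (Fin (a + 1)) b, cf a b B γ j κf * mval a b A γ i κf
      = entry a b A B γ i j := by
  unfold cf mval entry
  have step1 : ∑ κf : κ → Sym (Fin (a + 1)) b,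
      (∏ k : κ, ∑ g ∈ univ.filter (fun g : Fin b → Fin (a + 1) => symOf g = κf k),
        ∏ r : Fin b, vc a b B γ j k r (g r))
      * (∏ k : κ, ((κf k : Multiset (Fin (a + 1))).map (pv a A γ i k)).prod)
      = ∏ k : κ, ∑ μ : Sym (Fin (a + 1)) b,
          (∑ g ∈ univ.filter (fun g : Fin b → Fin (a + 1) => symOf g = μ),
            ∏ r : Fin b, vc a b B γ j k r (g r))
          * ((μ : Multiset (Fin (a + 1))).map (pv a A γ i k)).prod := by
    rw [Finset.prod_univ_sum]
    rw [Fintype.piFinset_univ]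
    apply Finset.sum_congr rfl
    intro κf _
    rw [Finset.prod_mul_distrib]
  rw [step1]
  apply Finset.prod_congr rfl
  intro k _
  have step2 : ∀ μ : Sym (Fin (a + 1)) b,
      (∑ g ∈ univ.filter (fun g : Fin b → Fin (a + 1) => symOf g = μ),
        ∏ r : Fin b, vc a b B γ j k r (g r))
      * ((μ : Multiset (Fin (a + 1))).map (pv a A γ i k)).prod
      = ∑ g ∈ univ.filter (fun g : Fin b → Fin (a + 1) => symOf g = μ),
          ∏ r : Fin b, (pv a A γ i k (g r) * vc a b B γ j k r (g r)) := by
    intro μ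
    rw [Finset.sum_mul]
    apply Finset.sum_congr rfl
    intro g hg
    have hμ : symOf g = μ := (Finset.mem_filter.mp hg).2
    rw [← hμ, mval_symOf]
    rw [← Finset.prod_mul_distrib]
    apply Finset.prod_congr rfl
    intro r _
    ring
  calc ∑ μ : Sym (Fin (a + 1)) b,
        (∑ g ∈ univ.filter (fun g : Fin b → Fin (a + 1) => symOf g = μ),
          ∏ r : Fin b, vc a b B γ j k r (g r))
        * ((μ : Multiset (Fin (a + 1))).map (pv a A γ i k)).prod
      = ∑ μ : Sym (Fin (a + 1)) b,
          ∑ g ∈ univ.filter (fun g : Fin b → Fin (a + 1) => symOf g = μ),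
            ∏ r : Fin b, (pv a A γ i k (g r) * vc a b B γ j k r (g r)) :=
        Finset.sum_congr rfl (fun μ _ => step2 μ)
    _ = ∑ g : Fin b → Fin (a + 1),
          ∏ r : Fin b, (pv a A γ i k (g r) * vc a b B γ j k r (g r)) :=
        Finset.sum_fiberwise_of_maps_to (fun g _ => Finset.mem_univ (symOf g)) _
    _ = ∏ r : Fin b, ∑ s : Fin (a + 1), pv a A γ i k s * vc a b B γ j k r s := by
        rw [Finset.prod_univ_sum, Fintype.piFinset_univ]


theorem key [Fintype ι] [Fintype κ] [DecidableEq κ] (a b : ℕ) (A B : ι → κ → Finset α)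
    (hA : ∀ i k, (A i k).card ≤ a) (hB : ∀ i k, (B i k).card ≤ b)
    (hdiag : ∀ i k, A i k ∩ B i k = ∅)
    (hoff : ∀ i j : ι, i ≠ j → ∃ k, (A i k ∩ B j k).Nonempty) :
    Fintype.card ι ≤ (a + b).choose b ^ Fintype.card κ := by
  obtain ⟨γ, hinj, hne0⟩ : ∃ γ : α → ℝ,
      (∀ x ∈ (univ.biUnion (fun i : ι => univ.biUnion (fun k : κ => A i k ∪ B i k))),
        ∀ y ∈ (univ.biUnion (fun i : ι => univ.biUnion (fun k : κ => A i k ∪ B i k))),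
          γ x = γ y → x = y) ∧
      ∀ x ∈ (univ.biUnion (fun i : ι => univ.biUnion (fun k : κ => A i k ∪ B i k))), γ x ≠ 0 := by
    set Y : Finset α := univ.biUnion (fun i : ι => univ.biUnion (fun k : κ => A i k ∪ B i k))
    refine ⟨fun x => if h : x ∈ Y then ((Y.equivFin ⟨x, h⟩ : ℕ) + 1 : ℝ) else 0, ?_, ?_⟩
    · intro x hx y hy hxy
      simp only [dif_pos hx, dif_pos hy] at hxy
      have h1 : (Y.equivFin ⟨x, hx⟩ : ℕ) = (Y.equivFin ⟨y, hy⟩ : ℕ) := by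
        have h0 : ((Y.equivFin ⟨x, hx⟩ : ℕ) : ℝ) = ((Y.equivFin ⟨y, hy⟩ : ℕ) : ℝ) :=
          add_right_cancel hxy
        exact_mod_cast h0
      have h2 : (⟨x, hx⟩ : {z // z ∈ Y}) = ⟨y, hy⟩ := Y.equivFin.injective (Fin.ext h1)
      exact Subtype.ext_iff.mp h2
    · intro x hx
      simp only [dif_pos hx]
      positivity
  have hmemA : ∀ (i : ι) (k : κ), ∀ y ∈ A i k,
      y ∈ univ.biUnion (fun i : ι => univ.biUnion (fun k : κ => A i k ∪ B i k)) := by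
    intro i k y hy
    exact mem_biUnion.mpr ⟨i, mem_univ _, mem_biUnion.mpr ⟨k, mem_univ _, mem_union_left _ hy⟩⟩
  have hmemB : ∀ (i : ι) (k : κ), ∀ y ∈ B i k,
      y ∈ univ.biUnion (fun i : ι => univ.biUnion (fun k : κ => A i k ∪ B i k)) := by
    intro i k y hy
    exact mem_biUnion.mpr ⟨i, mem_univ _, mem_biUnion.mpr ⟨k, mem_univ _, mem_union_right _ hy⟩⟩
  have hind : LinearIndependent ℝ (fun j : ι => cf a b B γ j) := by
    rw [Fintype.linearIndependent_iff]
    intro g hg i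
    have hz : ∀ κf : κ → Sym (Fin (a + 1)) b, ∑ j : ι, g j * cf a b B γ j κf = 0 := by
      intro κf
      have := congrFun hg κf
      simpa using this
    have h2 : ∑ j : ι, g j * entry a b A B γ i j = 0 := by
      calc ∑ j : ι, g j * entry a b A B γ i j
          = ∑ j : ι, ∑ κf : κ → Sym (Fin (a + 1)) b,
              g j * (cf a b B γ j κf * mval a b A γ i κf) := by
            refine Finset.sum_congr rfl fun j _ => ?_
            rw [← Finset.mul_sum, pairing]
        _ = ∑ κf : κ → Sym (Fin (a + 1)) b,
              (∑ j : ι, g j * cf a b B γ j κf) * mval a b A γ i κf := by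
            rw [Finset.sum_comm]
            refine Finset.sum_congr rfl fun κf _ => ?_
            rw [Finset.sum_mul]
            exact Finset.sum_congr rfl fun j _ => by ring
        _ = 0 := by simp [hz]
    have hsingle : ∑ j : ι, g j * entry a b A B γ i j = g i * entry a b A B γ i i := by
      refine Finset.sum_eq_single i ?_ ?_
      · intro j _ hj
        obtain ⟨k₀, x, hx⟩ := hoff i j (fun hij => hj hij.symm)
        rw [entry_eq_zero (fun k => hA i k) (fun k => hB j k)
          (Finset.mem_inter.mp hx).1 (Finset.mem_inter.mp hx).2, mul_zero]
      · intro hi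
        exact absurd (mem_univ i) hi
    rw [hsingle] at h2
    have hnz : entry a b A B γ i i ≠ 0 := by
      refine entry_ne_zero (fun k => hA i k) ?_ ?_
      · intro k x hxB y hyA hxy
        have hxy' := hinj x (hmemB i k x hxB) y (hmemA i k y hyA) hxy
        have : x ∈ A i k ∩ B i k := Finset.mem_inter.mpr ⟨hxy' ▸ hyA, hxB⟩
        rw [hdiag i k] at this
        exact absurd this (Finset.notMem_empty x)
      · intro k y hy
        exact hne0 y (hmemA i k y hy)
    exact (mul_eq_zero.mp h2).resolve_right hnz
  have hcard := hind.fintype_card_le_finrank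
  rw [Module.finrank_pi] at hcard
  calc Fintype.card ι ≤ Fintype.card (κ → Sym (Fin (a + 1)) b) := hcard
    _ = Fintype.card (Sym (Fin (a + 1)) b) ^ Fintype.card κ := Fintype.card_fun
    _ = (a + b).choose b ^ Fintype.card κ := by
        rw [Sym.card_sym_eq_choose]
        congr 2
        rw [Fintype.card_fin]
        omega

end Stmt15Aux

theorem stmt_15 (n t a b m : ℕ) (ht : t < n) (ha : 1 ≤ a) (hb : 1 ≤ b) (hm : 1 ≤ m)
    (X : Type*) [DecidableEq X]
    (hX : ∃ f : Fin (a + b) → X, Function.Injective f)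
    (A B : Fin m → Fin n → Finset X)
    (hA : ∀ i k, (A i k).card ≤ a) (hB : ∀ i k, (B i k).card ≤ b)
    (h : ∀ i j : Fin m,
      t + 1 ≤ (Finset.univ.filter fun k : Fin n => A i k ∩ B j k = ∅).card ↔ i = j) :
    m ≤ n.choose (t + 1) * (a + b).choose b ^ (t + 1) := by
  classical
  have hTex : ∀ i : Fin m, ∃ T : Finset (Fin n),
      T ⊆ Finset.univ.filter (fun k => A i k ∩ B i k = ∅) ∧ T.card = t + 1 :=
    fun i => Finset.exists_subset_card_eq ((h i i).mpr rfl)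
  choose T hTsub hTcard using hTex
  have hTmem : ∀ i, T i ∈ Finset.powersetCard (t + 1) (Finset.univ : Finset (Fin n)) := by
    intro i
    rw [Finset.mem_powersetCard]
    exact ⟨Finset.subset_univ _, hTcard i⟩
  have hfiber : ∀ S ∈ Finset.powersetCard (t + 1) (Finset.univ : Finset (Fin n)),
      (Finset.univ.filter (fun i => T i = S)).card ≤ (a + b).choose b ^ (t + 1) := by
    intro S hS
    rw [Finset.mem_powersetCard] at hS
    have hkey := Stmt15Aux.key (ι := {i // i ∈ Finset.univ.filter (fun i => T i = S)})
      (κ := {k // k ∈ S}) a b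
      (fun i k => A i.1 k.1) (fun i k => B i.1 k.1)
      (fun i k => hA i.1 k.1) (fun i k => hB i.1 k.1)
      (by
        rintro ⟨i, hi⟩ ⟨k, hk⟩
        have hTi : T i = S := (Finset.mem_filter.mp hi).2
        have : k ∈ Finset.univ.filter (fun k => A i k ∩ B i k = ∅) := hTsub i (hTi ▸ hk)
        exact (Finset.mem_filter.mp this).2)
      (by
        rintro ⟨i, hi⟩ ⟨j, hj⟩ hij
        have hij' : i ≠ j := fun e => hij (Subtype.ext e)
        have hcard : (Finset.univ.filter fun k : Fin n => A i k ∩ B j k = ∅).card ≤ t := by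
          by_contra hcon
          push_neg at hcon
          exact hij' ((h i j).mp hcon)
        by_contra hcon
        push_neg at hcon
        have hsub : S ⊆ Finset.univ.filter (fun k : Fin n => A i k ∩ B j k = ∅) := by
          intro k hk
          rw [Finset.mem_filter]
          refine ⟨Finset.mem_univ _, ?_⟩
          have := hcon ⟨k, hk⟩
          exact this
        have := Finset.card_le_card hsub
        rw [hS.2] at this
        omega)
    rw [Fintype.card_coe, Fintype.card_coe, hS.2] at hkey
    exact hkey
  calc m = (Finset.univ : Finset (Fin m)).card := by simp
    _ = ∑ S ∈ Finset.powersetCard (t + 1) (Finset.univ : Finset (Fin n)),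
          (Finset.univ.filter (fun i => T i = S)).card :=
        Finset.card_eq_sum_card_fiberwise (fun i _ => hTmem i)
    _ ≤ (Finset.powersetCard (t + 1) (Finset.univ : Finset (Fin n))).card
          • ((a + b).choose b ^ (t + 1)) :=
        Finset.sum_le_card_nsmul _ _ _ hfiber
    _ = n.choose (t + 1) * (a + b).choose b ^ (t + 1) := by
        rw [Finset.card_powersetCard, Finset.card_univ, Fintype.card_fin, smul_eq_mul]
end

section
/- Let n > t ≥ 0, a, b ≥ 1, and let X be a set with |X| ≥ a+b. Then there exists an (n,t,a,b,X)-system of size m = C(n, t+1)·(C(a+b, a) − 2)^{t+1}, i.e., pairs (A_i, B_i), i ∈ [m], with each A_{i,k} ⊆ X of size at most a, each B_{i,k} ⊆ X of size at most b, such that dist(A_i, B_j) ≥ t+1 if and only if i = j, where dist(A_i,B_j) counts the coordinates k with A_{i,k} ∩ B_{j,k} = ∅. -/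
theorem stmt_16 (n t a b : ℕ) (ht : t < n) (ha : 1 ≤ a) (hb : 1 ≤ b)
    (X : Type*) [DecidableEq X]
    (hX : ∃ f : Fin (a + b) → X, Function.Injective f) :
    ∃ (A B : Fin (n.choose (t + 1) * ((a + b).choose a - 2) ^ (t + 1)) →
        Fin n → Finset X),
      (∀ i k, (A i k).card ≤ a) ∧ (∀ i k, (B i k).card ≤ b) ∧
      (∀ i j, t + 1 ≤ (Finset.univ.filter fun k : Fin n => A i k ∩ B j k = ∅).card
        ↔ i = j) := by
  classical
  obtain ⟨f, hf⟩ := hX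
  -- two distinguished a-subsets of Fin (a+b)
  let e1 : Fin a ↪ Fin (a + b) :=
    ⟨fun i => ⟨i.1, by omega⟩, fun i j h => Fin.ext (by simpa using congrArg Fin.val h)⟩
  let e2 : Fin a ↪ Fin (a + b) :=
    ⟨fun i => ⟨b + i.1, by omega⟩, fun i j h => Fin.ext (by
      have := congrArg Fin.val h; simp at this; omega)⟩
  obtain ⟨P0, hP0card, hzP⟩ : ∃ P0 : Finset (Fin (a + b)),
      P0.card = a ∧ (⟨0, by omega⟩ : Fin (a + b)) ∈ P0 :=
    ⟨Finset.univ.map e1, by simp, Finset.mem_map.2 ⟨⟨0, ha⟩, Finset.mem_univ _, rfl⟩⟩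
  obtain ⟨Q0, hQ0card, hzQ⟩ : ∃ Q0 : Finset (Fin (a + b)),
      Q0.card = a ∧ (⟨0, by omega⟩ : Fin (a + b)) ∉ Q0 := by
    refine ⟨Finset.univ.map e2, by simp, ?_⟩
    intro h
    obtain ⟨i, -, hi⟩ := Finset.mem_map.1 h
    have := congrArg Fin.val hi
    change b + i.1 = 0 at this
    omega
  have hPQ : P0 ≠ Q0 := fun h => hzQ (h ▸ hzP)
  -- the pool of other a-subsets
  set s : Finset (Finset (Fin (a + b))) :=
    ((Finset.powersetCard a Finset.univ).erase P0).erase Q0 with hs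
  have hP0mem : P0 ∈ Finset.powersetCard a (Finset.univ : Finset (Fin (a+b))) := by
    rw [Finset.mem_powersetCard]; exact ⟨Finset.subset_univ _, hP0card⟩
  have hQ0mem : Q0 ∈ Finset.powersetCard a (Finset.univ : Finset (Fin (a+b))) := by
    rw [Finset.mem_powersetCard]; exact ⟨Finset.subset_univ _, hQ0card⟩
  have hscard : s.card = (a + b).choose a - 2 := by
    rw [hs, Finset.card_erase_of_mem (Finset.mem_erase.2 ⟨Ne.symm hPQ, hQ0mem⟩),
      Finset.card_erase_of_mem hP0mem, Finset.card_powersetCard, Finset.card_univ,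
      Fintype.card_fin]
    omega
  set D := (a + b).choose a - 2 with hD
  let enum : Fin D → Finset (Fin (a + b)) := fun d => ((s.equivFinOfCardEq hscard).symm d).1
  have henum_mem : ∀ d, enum d ∈ s := fun d => ((s.equivFinOfCardEq hscard).symm d).2
  have henum_inj : Function.Injective enum := fun d d' h =>
    (s.equivFinOfCardEq hscard).symm.injective (Subtype.ext h)
  have henum_card : ∀ d, (enum d).card = a := fun d => by
    have := henum_mem d
    rw [hs, Finset.mem_erase, Finset.mem_erase, Finset.mem_powersetCard] at this
    exact this.2.2.2
  have henum_ne_P0 : ∀ d, enum d ≠ P0 := fun d => by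
    have := henum_mem d
    rw [hs, Finset.mem_erase, Finset.mem_erase] at this
    exact this.2.1
  have henum_ne_Q0 : ∀ d, enum d ≠ Q0 := fun d => by
    have := henum_mem d
    rw [hs, Finset.mem_erase] at this
    exact this.1
  -- the index type
  let I := {S : Finset (Fin n) // S.card = t + 1} × (Fin (t + 1) → Fin D)
  have hcardI : Fintype.card I = n.choose (t + 1) * D ^ (t + 1) := by
    simp [I, Fintype.card_finset_len]
  let e : Fin (n.choose (t + 1) * D ^ (t + 1)) ≃ I :=
    (Fintype.equivFinOfCardEq hcardI).symm
  -- the construction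
  let PS : I → Fin n → Finset (Fin (a + b)) := fun p k =>
    if h : k ∈ p.1.1 then enum (p.2 ((p.1.1.orderIsoOfFin p.1.2).symm ⟨k, h⟩)) else P0
  let QS : I → Fin n → Finset (Fin (a + b)) := fun p k =>
    if h : k ∈ p.1.1 then enum (p.2 ((p.1.1.orderIsoOfFin p.1.2).symm ⟨k, h⟩)) else Q0
  have hPScard : ∀ p k, (PS p k).card = a := by
    intro p k
    show (dite _ _ _ : Finset _).card = a
    split <;> simp [henum_card, hP0card]
  have hQScard : ∀ p k, (QS p k).card = a := by
    intro p k
    show (dite _ _ _ : Finset _).card = a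
    split <;> simp [henum_card, hQ0card]
  -- main injectivity lemma
  have main : ∀ p q : I,
      t + 1 ≤ (Finset.univ.filter fun k : Fin n => PS p k = QS q k).card → p = q := by
    rintro ⟨⟨S, hS⟩, gi⟩ ⟨⟨T, hT⟩, gj⟩ hcard
    set F := Finset.univ.filter fun k : Fin n =>
      PS (⟨⟨S, hS⟩, gi⟩ : I) k = QS (⟨⟨T, hT⟩, gj⟩ : I) k with hF
    have hmem : ∀ k ∈ F, PS (⟨⟨S, hS⟩, gi⟩ : I) k = QS (⟨⟨T, hT⟩, gj⟩ : I) k :=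
      fun k hk => (Finset.mem_filter.1 hk).2
    have hFS : F ⊆ S := by
      intro k hk
      by_contra hkS
      have heq := hmem k hk
      rw [show PS (⟨⟨S, hS⟩, gi⟩ : I) k = P0 from dif_neg hkS] at heq
      by_cases hkT : k ∈ T
      · rw [show QS (⟨⟨T, hT⟩, gj⟩ : I) k = enum _ from dif_pos hkT] at heq
        exact henum_ne_P0 _ heq.symm
      · rw [show QS (⟨⟨T, hT⟩, gj⟩ : I) k = Q0 from dif_neg hkT] at heq
        exact hPQ heq
    have hFT : F ⊆ T := by
      intro k hk
      by_contra hkT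
      have heq := hmem k hk
      rw [show QS (⟨⟨T, hT⟩, gj⟩ : I) k = Q0 from dif_neg hkT] at heq
      by_cases hkS : k ∈ S
      · rw [show PS (⟨⟨S, hS⟩, gi⟩ : I) k = enum _ from dif_pos hkS] at heq
        exact henum_ne_Q0 _ heq
      · rw [show PS (⟨⟨S, hS⟩, gi⟩ : I) k = P0 from dif_neg hkS] at heq
        exact hPQ heq
    have hFeqS : F = S := Finset.eq_of_subset_of_card_le hFS (by rw [hS]; exact hcard)
    have hFeqT : F = T := Finset.eq_of_subset_of_card_le hFT (by rw [hT]; exact hcard)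
    have hSTeq : S = T := hFeqS.symm.trans hFeqT
    subst hSTeq
    have hTS : hS = hT := rfl
    subst hTS
    have hgi : gi = gj := by
      funext m
      have hk : (S.orderIsoOfFin hS m).1 ∈ S := (S.orderIsoOfFin hS m).2
      have hkF : (S.orderIsoOfFin hS m).1 ∈ F := by rw [hFeqS]; exact hk
      have heq := hmem _ hkF
      rw [show PS (⟨⟨S, hS⟩, gi⟩ : I) _ = enum _ from dif_pos hk,
        show QS (⟨⟨S, hS⟩, gj⟩ : I) _ = enum _ from dif_pos hk] at heq
      have h2 := henum_inj heq
      have hcoe : (⟨((S.orderIsoOfFin hS m) : Fin n), hk⟩ : {x // x ∈ S})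
          = S.orderIsoOfFin hS m := rfl
      rw [hcoe, OrderIso.symm_apply_apply] at h2
      exact h2
    rw [hgi]
  refine ⟨fun i k => (PS (e i) k).image f, fun i k => ((QS (e i) k)ᶜ).image f, ?_, ?_, ?_⟩
  · intro i k
    rw [Finset.card_image_of_injective _ hf, hPScard]
  · intro i k
    rw [Finset.card_image_of_injective _ hf, Finset.card_compl, hQScard,
      Fintype.card_fin]
    omega
  · have key : ∀ i j k, ((PS (e i) k).image f ∩ ((QS (e j) k)ᶜ).image f = ∅)
        ↔ PS (e i) k = QS (e j) k := by
      intro i j k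
      rw [← Finset.image_inter _ _ hf, Finset.image_eq_empty]
      constructor
      · intro h
        refine Finset.eq_of_subset_of_card_le ?_ (by rw [hPScard, hQScard])
        intro x hx
        by_contra hxQ
        exact Finset.eq_empty_iff_forall_notMem.1 h x
          (Finset.mem_inter.2 ⟨hx, Finset.mem_compl.2 hxQ⟩)
      · intro h
        rw [h]
        simp
    intro i j
    have hsetEq : (Finset.univ.filter fun k : Fin n =>
        (PS (e i) k).image f ∩ ((QS (e j) k)ᶜ).image f = ∅)
        = Finset.univ.filter fun k : Fin n => PS (e i) k = QS (e j) k := by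
      apply Finset.filter_congr
      intro k _
      exact key i j k
    rw [hsetEq]
    constructor
    · intro hcard
      exact e.injective (main _ _ hcard)
    · rintro rfl
      have hsub : (e i).1.1 ⊆ Finset.univ.filter
          (fun k : Fin n => PS (e i) k = QS (e i) k) := by
        intro k hk
        rw [Finset.mem_filter]
        refine ⟨Finset.mem_univ _, ?_⟩
        rw [show PS (e i) k = enum _ from dif_pos hk,
          show QS (e i) k = enum _ from dif_pos hk]
      calc t + 1 = (e i).1.1.card := (e i).1.2.symm
        _ ≤ _ := Finset.card_le_card hsub
end

section
/- For every m ≥ 1, if f maps the vertices of the disjoint union of two cliques K_m + K_m (with vertex sets U = {u_1,…,u_m} and V = {v_1,…,v_m}) injectively into Z^d for some d, and there is a threshold t such that two vertices are adjacent if and only if their images differ in at least t coordinates, then t ≥ m. -/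
open Finset

private lemma two_mul_le_sq' (p q : ℕ) : 2 * (p * q) ≤ p * p + q * q := by
  rcases le_total p q with h | h <;> nlinarith

private lemma key_eq (m : ℕ) (a b : Fin m → ℤ) :
    2 * (∑ i, ∑ j, if a i = b j then 1 else 0) ≤
      (∑ i, ∑ j, if a i = a j then 1 else 0) +
        (∑ i, ∑ j, if b i = b j then 1 else 0) := by
  classical
  have hempty : ∀ (c : Fin m → ℤ) (v : ℤ), v ∉ univ.image c →
      (univ.filter fun i => c i = v) = ∅ := by
    intro c v hv
    rw [Finset.filter_eq_empty_iff]
    intro i _ h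
    exact hv (Finset.mem_image.mpr ⟨i, Finset.mem_univ i, h⟩)
  have hgen : ∀ (c e : Fin m → ℤ),
      (∑ i, ∑ j, if c i = e j then 1 else 0) =
        ∑ v ∈ univ.image c, ((univ.filter fun i => c i = v).card) *
          ((univ.filter fun i => e i = v).card) := by
    intro c e
    have h1 : ∀ i, (∑ j, if c i = e j then 1 else 0) =
        (univ.filter fun j => e j = c i).card := by
      intro i
      rw [Finset.card_filter]
      exact Finset.sum_congr rfl fun j _ => by by_cases h : c i = e j <;> simp [h, eq_comm]
    simp only [h1]
    rw [Finset.sum_comp (fun v => (univ.filter fun j => e j = v).card) c]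
    simp [smul_eq_mul]
  have hext : ∀ (c e : Fin m → ℤ),
      (∑ v ∈ univ.image c, ((univ.filter fun i => c i = v).card) *
          ((univ.filter fun i => e i = v).card)) =
        ∑ v ∈ (univ.image a ∪ univ.image b : Finset ℤ),
          ((univ.filter fun i => c i = v).card) *
          ((univ.filter fun i => e i = v).card) → True := fun _ _ _ => trivial
  clear hext
  rw [hgen a b, hgen a a, hgen b b]
  have hca : (∑ v ∈ univ.image a, ((univ.filter fun i => a i = v).card) *
      ((univ.filter fun i => b i = v).card)) =
      ∑ v ∈ (univ.image a ∪ univ.image b : Finset ℤ),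
        ((univ.filter fun i => a i = v).card) *
        ((univ.filter fun i => b i = v).card) := by
    apply Finset.sum_subset Finset.subset_union_left
    intro v _ hv'
    rw [hempty a v hv']
    simp
  have haa : (∑ v ∈ univ.image a, ((univ.filter fun i => a i = v).card) *
      ((univ.filter fun i => a i = v).card)) =
      ∑ v ∈ (univ.image a ∪ univ.image b : Finset ℤ),
        ((univ.filter fun i => a i = v).card) *
        ((univ.filter fun i => a i = v).card) := by
    apply Finset.sum_subset Finset.subset_union_left
    intro v _ hv'
    rw [hempty a v hv']
    simp
  have hbb : (∑ v ∈ univ.image b, ((univ.filter fun i => b i = v).card) *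
      ((univ.filter fun i => b i = v).card)) =
      ∑ v ∈ (univ.image a ∪ univ.image b : Finset ℤ),
        ((univ.filter fun i => b i = v).card) *
        ((univ.filter fun i => b i = v).card) := by
    apply Finset.sum_subset Finset.subset_union_right
    intro v _ hv'
    rw [hempty b v hv']
    simp
  rw [hca, haa, hbb, Finset.mul_sum, ← Finset.sum_add_distrib]
  exact Finset.sum_le_sum fun v _ => two_mul_le_sq' _ _

private lemma key_ne (m : ℕ) (a b : Fin m → ℤ) :
    (∑ i, ∑ j, if a i ≠ a j then 1 else 0) +
      (∑ i, ∑ j, if b i ≠ b j then 1 else 0) ≤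
      2 * ∑ i, ∑ j, if a i ≠ b j then 1 else 0 := by
  classical
  have hcompl : ∀ (c e : Fin m → ℤ),
      (∑ i, ∑ j, if c i = e j then 1 else 0) +
        (∑ i, ∑ j, if c i ≠ e j then 1 else 0) = m * m := by
    intro c e
    have h1 : ∀ i j : Fin m, ((if c i = e j then 1 else 0) +
        (if c i ≠ e j then 1 else 0) : ℕ) = 1 := by
      intro i j; by_cases h : c i = e j <;> simp [h]
    have h2 : (∑ i : Fin m, ∑ j : Fin m, (((if c i = e j then 1 else 0) +
        (if c i ≠ e j then 1 else 0)) : ℕ)) = m * m := by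
      simp only [h1]
      simp [Finset.card_univ]
    rw [← h2]
    simp only [Finset.sum_add_distrib]
  have h1 := hcompl a a
  have h2 := hcompl b b
  have h3 := hcompl a b
  have h4 := key_eq m a b
  linarith

theorem stmt_17 (m : ℕ) (hm : 1 ≤ m) (d t : ℕ)
    (f : Fin m ⊕ Fin m → (Fin d → ℤ)) (hf : Function.Injective f)
    (hadj : ∀ x y : Fin m ⊕ Fin m, x ≠ y →
      (x.isLeft = y.isLeft ↔ t ≤ hammingDist (f x) (f y))) :
    m ≤ t := by
  classical
  -- cross distances are < t
  have hcross : ∀ i j : Fin m,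
      hammingDist (f (Sum.inl i)) (f (Sum.inr j)) + 1 ≤ t := by
    intro i j
    have h := hadj (Sum.inl i) (Sum.inr j) (by simp)
    simp only [Sum.isLeft_inl, Sum.isLeft_inr] at h
    have : ¬ (t ≤ hammingDist (f (Sum.inl i)) (f (Sum.inr j))) := by
      intro hle
      exact absurd (h.mpr hle) (by simp)
    omega
  -- within distances are ≥ t
  have hinl : ∀ i j : Fin m, i ≠ j →
      t ≤ hammingDist (f (Sum.inl i)) (f (Sum.inl j)) := by
    intro i j hij
    exact (hadj (Sum.inl i) (Sum.inl j) (by simp [hij])).mp rfl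
  have hinr : ∀ i j : Fin m, i ≠ j →
      t ≤ hammingDist (f (Sum.inr i)) (f (Sum.inr j)) := by
    intro i j hij
    exact (hadj (Sum.inr i) (Sum.inr j) (by simp [hij])).mp rfl
  -- rewrite double sums of hamming distances coordinatewise
  have hsplit : ∀ g h' : Fin m → Fin d → ℤ,
      (∑ i, ∑ j, hammingDist (g i) (h' j)) =
        ∑ c, ∑ i, ∑ j, if g i c ≠ h' j c then 1 else 0 := by
    intro g h'
    have hd : ∀ i j, hammingDist (g i) (h' j) =
        ∑ c, if g i c ≠ h' j c then 1 else 0 := by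
      intro i j
      exact Finset.card_filter _ _
    simp only [hd]
    calc (∑ i, ∑ j, ∑ c, if g i c ≠ h' j c then 1 else 0)
        = ∑ i, ∑ c, ∑ j, if g i c ≠ h' j c then 1 else 0 :=
          Finset.sum_congr rfl fun i _ => Finset.sum_comm
      _ = ∑ c, ∑ i, ∑ j, if g i c ≠ h' j c then 1 else 0 := Finset.sum_comm
  set A := ∑ i, ∑ j, hammingDist (f (Sum.inl i)) (f (Sum.inl j)) with hA
  set B := ∑ i, ∑ j, hammingDist (f (Sum.inr i)) (f (Sum.inr j)) with hB
  set C := ∑ i, ∑ j, hammingDist (f (Sum.inl i)) (f (Sum.inr j)) with hC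
  -- main inequality A + B ≤ 2C
  have hABC : A + B ≤ 2 * C := by
    rw [hA, hB, hC, hsplit, hsplit, hsplit, ← Finset.sum_add_distrib,
      Finset.mul_sum]
    exact Finset.sum_le_sum fun c _ =>
      key_ne m (fun i => f (Sum.inl i) c) (fun i => f (Sum.inr i) c)
  -- lower bounds for A and B
  have hlow : ∀ g : Fin m → Fin d → ℤ,
      (∀ i j : Fin m, i ≠ j → t ≤ hammingDist (g i) (g j)) →
      (m * m - m) * t ≤ ∑ i, ∑ j, hammingDist (g i) (g j) := by
    intro g hg
    have h1 : (∑ i, ∑ j, hammingDist (g i) (g j)) =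
        ∑ p ∈ (univ : Finset (Fin m)) ×ˢ univ, hammingDist (g p.1) (g p.2) := by
      rw [Finset.sum_product]
    rw [h1]
    calc (m * m - m) * t = ∑ _p ∈ (univ : Finset (Fin m)).offDiag, t := by
          rw [Finset.sum_const, smul_eq_mul, Finset.offDiag_card,
            Finset.card_univ, Fintype.card_fin]
      _ ≤ ∑ p ∈ (univ : Finset (Fin m)).offDiag, hammingDist (g p.1) (g p.2) :=
          Finset.sum_le_sum fun p hp => hg p.1 p.2 (Finset.mem_offDiag.mp hp).2.2
      _ ≤ ∑ p ∈ (univ : Finset (Fin m)) ×ˢ univ, hammingDist (g p.1) (g p.2) :=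
          Finset.sum_le_sum_of_subset (by intro p _; simp)
  have hAlow : (m * m - m) * t ≤ A := hlow _ hinl
  have hBlow : (m * m - m) * t ≤ B := hlow _ hinr
  -- upper bound for C
  have hCup : C + m * m ≤ m * m * t := by
    have h2 : C + m * m = ∑ i : Fin m, ∑ j : Fin m,
        (hammingDist (f (Sum.inl i)) (f (Sum.inr j)) + 1) := by
      rw [hC]
      simp [Finset.sum_add_distrib, Finset.card_univ, mul_comm]
    rw [h2]
    calc (∑ i : Fin m, ∑ j : Fin m,
          (hammingDist (f (Sum.inl i)) (f (Sum.inr j)) + 1))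
        ≤ ∑ _i : Fin m, ∑ _j : Fin m, t :=
          Finset.sum_le_sum fun i _ => Finset.sum_le_sum fun j _ => hcross i j
      _ = m * m * t := by simp [Finset.card_univ, mul_assoc]
  -- conclude
  have hK : m * m - m + m = m * m := by
    have : m ≤ m * m := Nat.le_mul_of_pos_left m (by omega)
    omega
  have hmmt : m * m * t = (m * m - m) * t + m * t := by
    rw [← add_mul, hK]
  have hfin : m * m ≤ m * t := by
    have h5 : C + ((m * m - m) + m) ≤ (m * m - m) * t + m * t := by
      rw [← hmmt, hK]; exact hCup
    linarith
  exact Nat.le_of_mul_le_mul_left hfin (by omega)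
end
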